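/- arXiv:0905.1898 — 6 statements merged into one kernel-verified Lean document; each statement's English description precedes it below -/
import Mathlib

section
/- Let G be a finite group which is not cyclic. Then G has a subgroup which is not characteristic: there exist a subgroup H ≤ G and a group automorphism φ ∈ Aut(G) such that φ(H) ≠ H. -/
/-!
If some cyclic subgroup `⟨x⟩` is not normal, an inner automorphism moves it.

If `G` is abelian, it is a product of cyclic groups `ℤ/p_kᵉᵏ`, and since it is not cyclic two
factors `i ≠ j` have the same prime, say with `p_iᵉⁱ ∣ p_jᵉʲ`. Adding to each element the
reduction of its `j`-th coordinate, placed in the `i`-th coordinate, is an automorphism (a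
transvection) which moves the generator of the `j`-th factor out of the subgroup it generates.

Otherwise `G` is not abelian but all its cyclic subgroups are normal. Take non-commuting `a, b`
with `o(a) + o(b)` minimal. Then `c = ⁅a, b⁆ ∈ ⟨a⟩ ∩ ⟨b⟩` commutes with `a` and `b`, and
minimality, applied to powers of `a` and to the elements `b * a ^ k` (whose powers are given by the
class-two formula `(b x) ^ K = b ^ K x ^ K ⁅x, b⁆ ^ (K choose 2)`), forces `o(a) = o(b) = 4` and
the quaternion relations. So `a` and `b` span a copy `ι(Q₈)` of the quaternion group, and
`G = ι(Q₈) · C_G(ι(Q₈))` because every element of `G` acts on `⟨a⟩` and on `⟨b⟩` by `±1`, as some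
element of `Q₈` does. The automorphism of `Q₈` exchanging `i` and `j` fixes the centre of `Q₈`,
which is all of `ι⁻¹(C_G(ι(Q₈)))`, hence extends to `G`, and it moves `⟨b⟩` onto `⟨a⟩`.
-/

open Subgroup Function
open scoped commutatorElement

section Transvection

variable {ι : Type*} [DecidableEq ι] {M : ι → Type*} [∀ i, AddCommGroup (M i)]

def Pi.transvection {i j : ι} (hij : i ≠ j) (f : M j →+ M i) : (∀ k, M k) ≃+ (∀ k, M k) where
  toFun x := x + Pi.single i (f (x j))
  invFun x := x - Pi.single i (f (x j))
  left_inv x := by simp [Pi.single_eq_of_ne hij.symm]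
  right_inv x := by simp [Pi.single_eq_of_ne hij.symm]
  map_add' x y := by simp only [Pi.add_apply, map_add, Pi.single_add]; abel

theorem Pi.transvection_single_notMem_zmultiples {i j : ι} (hij : i ≠ j) (f : M j →+ M i)
    {m : M j} (hm : f m ≠ 0) :
    Pi.transvection hij f (Pi.single j m) ∉ AddSubgroup.zmultiples (Pi.single j m) := by
  rintro ⟨k, hk⟩
  exact hm (by simpa [Pi.transvection, Pi.single_eq_of_ne hij] using (congrFun hk i).symm)

end Transvection

theorem AddEquiv.exists_addAut_apply_notMem_zmultiples {M N : Type*} [AddGroup M] [AddGroup N]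
    (e : M ≃+ N) (h : ∃ (ψ : N ≃+ N) (x : N), ψ x ∉ AddSubgroup.zmultiples x) :
    ∃ (ψ : M ≃+ M) (x : M), ψ x ∉ AddSubgroup.zmultiples x := by
  obtain ⟨ψ, x, hx⟩ := h
  refine ⟨e.trans (ψ.trans e.symm), e.symm x, ?_⟩
  rintro ⟨k, hk⟩
  exact hx ⟨k, by simpa using congrArg e hk⟩

theorem exists_dvd_of_not_pairwise_coprime_pow {ι : Type*} {p e : ι → ℕ}
    (hp : ∀ i, (p i).Prime) (h : ¬Pairwise (Nat.Coprime on fun i ↦ p i ^ e i)) :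
    ∃ i j, i ≠ j ∧ p i ^ e i ∣ p j ^ e j ∧ p i ^ e i ≠ 1 := by
  simp only [Pairwise, onFun, not_forall] at h
  obtain ⟨i, j, hij, hcop⟩ := h
  have hpij : p i = p j := by
    by_contra hne
    exact hcop (Nat.coprime_pow_primes _ _ (hp i) (hp j) hne)
  rcases le_total (e i) (e j) with hle | hle
  · exact ⟨i, j, hij, hpij ▸ pow_dvd_pow _ hle, fun h1 ↦ hcop (by simp [h1])⟩
  · exact ⟨j, i, hij.symm, hpij ▸ pow_dvd_pow _ hle, fun h1 ↦ hcop (by simp [h1])⟩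

theorem AddCommGroup.exists_addAut_apply_notMem_zmultiples {M : Type*} [AddCommGroup M]
    [Finite M] (hM : ¬IsAddCyclic M) : ∃ (ψ : M ≃+ M) (x : M), ψ x ∉ AddSubgroup.zmultiples x := by
  classical
  obtain ⟨ι, _, p, hp, e, ⟨E⟩⟩ := AddCommGroup.equiv_directSum_zmod_of_finite M
  let n i := p i ^ e i
  have E' : M ≃+ ∀ i, ZMod (n i) := E.trans (DirectSum.addEquivProd _)
  have hcop : ¬Pairwise (Nat.Coprime on n) := fun hcop ↦
    hM (isAddCyclic_of_surjective ((ZMod.prodEquivPi n hcop).toAddEquiv.trans E'.symm)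
      (AddEquiv.surjective _))
  obtain ⟨i, j, hij, hdvd, hne⟩ := exists_dvd_of_not_pairwise_coprime_pow hp hcop
  refine E'.exists_addAut_apply_notMem_zmultiples
    ⟨Pi.transvection hij (ZMod.castHom hdvd (ZMod (n i))).toAddMonoidHom, Pi.single j 1,
      Pi.transvection_single_notMem_zmultiples hij _ ?_⟩
  rw [RingHom.toAddMonoidHom_eq_coe, AddMonoidHom.coe_coe, map_one, Ne, ZMod.one_eq_zero_iff]
  exact hne

section Group

variable {G : Type*} [Group G]

theorem Commute.mem_zpowers_right {x y z : G} (h : Commute z x) (hy : y ∈ zpowers x) :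
    Commute z y := by
  obtain ⟨k, rfl⟩ := hy
  exact h.zpow_right k

theorem commute_inv_mul_of_conj_eq {u v x : G} (h : u * x * u⁻¹ = v * x * v⁻¹) :
    Commute x (u⁻¹ * v) :=
  calc x * (u⁻¹ * v) = u⁻¹ * (u * x * u⁻¹) * v := by group
    _ = u⁻¹ * v * x := by rw [h]; group

theorem commutatorElement_pow_left {x y : G} (h : Commute ⁅x, y⁆ x) (n : ℕ) :
    ⁅x ^ n, y⁆ = ⁅x, y⁆ ^ n := by
  induction n with
  | zero => simp
  | succ n ih =>
    rw [show ⁅x ^ (n + 1), y⁆ = x * ⁅x ^ n, y⁆ * x⁻¹ * ⁅x, y⁆ by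
      simp only [commutatorElement_def]; group, ih, (h.pow_left n).symm.mul_inv_cancel, pow_succ]

theorem mul_pow_of_commute_commutatorElement {x y : G} (hx : Commute ⁅x, y⁆ x)
    (hy : Commute ⁅x, y⁆ y) (n : ℕ) : (y * x) ^ n = y ^ n * x ^ n * ⁅x, y⁆ ^ n.choose 2 := by
  induction n with
  | zero => simp
  | succ n ih =>
    have hxy : x ^ n * y = ⁅x, y⁆ ^ n * y * x ^ n := by
      rw [← commutatorElement_pow_left hx, commutatorElement_def]; group
    have hcx : Commute (⁅x, y⁆ ^ n) (y * x ^ n * x) :=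
      ((hy.mul_right (hx.pow_right n)).mul_right hx).pow_left n
    calc (y * x) ^ (n + 1) = y ^ n * x ^ n * ⁅x, y⁆ ^ n.choose 2 * (y * x) := by
          rw [pow_succ, ih]
      _ = y ^ n * (x ^ n * y) * x * ⁅x, y⁆ ^ n.choose 2 := by
        rw [mul_assoc _ (_ ^ _), ((hy.mul_right hx).pow_left _).eq]; group
      _ = y ^ n * (⁅x, y⁆ ^ n * (y * x ^ n * x)) * ⁅x, y⁆ ^ n.choose 2 := by rw [hxy]; group
      _ = y ^ (n + 1) * x ^ (n + 1) * ⁅x, y⁆ ^ (n + 1).choose 2 := by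
        rw [hcx.eq, Nat.choose_succ_succ', Nat.choose_one_right]; group

variable [Finite G]

theorem mem_zpowers_of_orderOf_dvd {g x y : G} (hx : x ∈ zpowers g) (hy : y ∈ zpowers g)
    (h : orderOf x ∣ orderOf y) : x ∈ zpowers y := by
  obtain ⟨i, rfl⟩ : ∃ i : ℕ, g ^ i = x :=
    (isOfFinOrder_of_finite g).mem_powers_iff_mem_zpowers.mpr hx
  obtain ⟨j, rfl⟩ : ∃ j : ℕ, g ^ j = y :=
    (isOfFinOrder_of_finite g).mem_powers_iff_mem_zpowers.mpr hy
  set n := orderOf g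
  set d := n.gcd j
  have hn : 0 < n := orderOf_pos g
  have hgd : g ^ d ∈ zpowers (g ^ j) := by
    refine ⟨n.gcdB j, ?_⟩
    simp only [← zpow_natCast, ← zpow_mul]
    rw [show (j : ℤ) * n.gcdB j = d - n * n.gcdA j by rw [Nat.gcd_eq_gcd_ab]; ring, zpow_sub,
      zpow_mul, zpow_natCast g n, pow_orderOf_eq_one, one_zpow, inv_one, mul_one]
  have hdi : d ∣ i := by
    have h1 : n ∣ i * (n / d) := by
      rw [orderOf_dvd_iff_pow_eq_one, pow_mul, ← orderOf_dvd_iff_pow_eq_one]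
      exact h.trans (by rw [orderOf_pow])
    conv_lhs at h1 => rw [← Nat.mul_div_cancel' (Nat.gcd_dvd_left n j)]
    exact Nat.dvd_of_mul_dvd_mul_right (Nat.div_pos (Nat.gcd_le_left j hn)
      (Nat.gcd_pos_of_pos_left _ hn)) h1
  obtain ⟨k, rfl⟩ := hdi
  rw [pow_mul]
  exact pow_mem hgd k

theorem mem_zpowers_pow_of_mul_orderOf_dvd {g x : G} (hx : x ∈ zpowers g) {m : ℕ}
    (hm : m * orderOf x ∣ orderOf g) : x ∈ zpowers (g ^ m) := by
  have hm0 : m ≠ 0 := by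
    rintro rfl
    rw [zero_mul, zero_dvd_iff] at hm
    exact (orderOf_pos g).ne' hm
  refine mem_zpowers_of_orderOf_dvd hx (pow_mem (mem_zpowers g) m) ?_
  rw [orderOf_pow_of_dvd hm0 (dvd_of_mul_right_dvd hm)]
  exact Nat.dvd_div_of_mul_dvd hm

theorem eq_of_mem_zpowers_of_orderOf_eq_two {x y : G} (hy : orderOf y = 2)
    (hx : x ∈ zpowers y) (hx1 : x ≠ 1) : x = y := by
  obtain ⟨k, rfl⟩ : ∃ k : ℕ, y ^ k = x :=
    (isOfFinOrder_of_finite y).mem_powers_iff_mem_zpowers.mpr hx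
  rw [← pow_mod_orderOf, hy] at hx1 ⊢
  rcases Nat.mod_two_eq_zero_or_one k with h | h <;> simp_all

end Group

section CentralProduct

variable {Q G : Type*} [Group Q] [Group G] (ι : Q →* G) (C : Subgroup G)

theorem exists_monoidHom_extend_of_centralProduct (hcomm : ∀ q, ∀ x ∈ C, Commute (ι q) x)
    (hgen : ∀ g, ∃ q, ∃ x ∈ C, ι q * x = g) (σ : Q →* Q) (hσ : ∀ q, ι q ∈ C → σ q = q) :
    ∃ φ : G →* G, ∀ q, ∀ x ∈ C, φ (ι q * x) = ι (σ q) * x := by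
  let m := ι.noncommCoprod C.subtype fun q x ↦ hcomm q x x.2
  let f := (ι.comp σ).noncommCoprod C.subtype fun q x ↦ hcomm (σ q) x x.2
  have hm : Surjective m := fun g ↦ by
    obtain ⟨q, x, hx, rfl⟩ := hgen g
    exact ⟨(q, ⟨x, hx⟩), rfl⟩
  have hker : m.ker ≤ f.ker := by
    rintro ⟨q, x⟩ (h : ι q * x = 1)
    have hq : ι q = (x : G)⁻¹ := eq_inv_of_mul_eq_one_left h
    show ι (σ q) * x = 1
    rwa [hσ q (hq ▸ inv_mem x.2)]
  exact ⟨m.liftOfRightInverse _ (rightInverse_surjInv hm) ⟨f, hker⟩, fun q x hx ↦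
    m.liftOfRightInverse_comp_apply _ _ ⟨f, hker⟩ (q, ⟨x, hx⟩)⟩

theorem exists_mulAut_extend_of_centralProduct (hcomm : ∀ q, ∀ x ∈ C, Commute (ι q) x)
    (hgen : ∀ g, ∃ q, ∃ x ∈ C, ι q * x = g) (σ : MulAut Q) (hσ : ∀ q, ι q ∈ C → σ q = q) :
    ∃ φ : MulAut G, ∀ q, φ (ι q) = ι (σ q) := by
  obtain ⟨φ, hφ⟩ := exists_monoidHom_extend_of_centralProduct ι C hcomm hgen σ hσ
  obtain ⟨ψ, hψ⟩ := exists_monoidHom_extend_of_centralProduct ι C hcomm hgen σ.symm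
    fun q hq ↦ show σ.symm q = q by rw [σ.symm_apply_eq, hσ q hq]
  have hψφ (g : G) : ψ (φ g) = g := by
    obtain ⟨q, x, hx, rfl⟩ := hgen g
    rw [hφ q x hx, hψ _ x hx]
    simp
  have hφψ (g : G) : φ (ψ g) = g := by
    obtain ⟨q, x, hx, rfl⟩ := hgen g
    rw [hψ q x hx, hφ _ x hx]
    simp
  refine ⟨{ φ with invFun := ψ, left_inv := hψφ, right_inv := hφψ }, fun q ↦ ?_⟩
  simpa using hφ q 1 C.one_mem

end CentralProduct

namespace QuaternionGroup

variable {n : ℕ} {G : Type*} [Group G]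

def lift (A B : G) (hA : A ^ (2 * n) = 1) (hB : B ^ 2 = A ^ n) (hBA : B⁻¹ * A * B = A⁻¹) :
    QuaternionGroup n →* G :=
  let e : ZMod (2 * n) →+ Additive G :=
    ZMod.lift _ ⟨zmultiplesHom _ (Additive.ofMul A), by
      rw [zmultiplesHom_apply, natCast_zsmul, ← ofMul_pow, hA, ofMul_one]⟩
  have he (k : ℤ) : (e k).toMul = A ^ k := by simp [e, ZMod.lift_coe]
  have hconj (k : ℤ) : A ^ k * B = B * A ^ (-k) := by
    rw [zpow_neg, ← inv_zpow, ← hBA, show B⁻¹ * A * B = B⁻¹ * A * B⁻¹⁻¹ by rw [inv_inv],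
      conj_zpow]
    group
  { toFun := fun
      | a i => (e i).toMul
      | xa i => B * (e i).toMul
    map_one' := show (e 0).toMul = 1 by simp
    map_mul' := by
      rintro (i | i) (j | j) <;>
        obtain ⟨k, rfl⟩ := ZMod.intCast_surjective i <;>
        obtain ⟨l, rfl⟩ := ZMod.intCast_surjective j
      · simp only [a_mul_a, ← Int.cast_add, he, zpow_add]
      · simp only [a_mul_xa, ← Int.cast_sub, he]
        rw [← mul_assoc, hconj, mul_assoc, ← zpow_add, neg_add_eq_sub]
      · simp only [xa_mul_a, ← Int.cast_add, he, zpow_add, mul_assoc]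
      · rw [xa_mul_xa, show (n : ZMod (2 * n)) + l - k = ((n + (-k + l) : ℤ) : ZMod (2 * n)) by
          push_cast; ring]
        simp only [he]
        rw [mul_assoc, ← mul_assoc (A ^ k), hconj, ← mul_assoc, ← mul_assoc, ← sq, hB,
          ← zpow_natCast, mul_assoc, ← zpow_add, ← zpow_add] }

variable (A B : G) (hA : A ^ (2 * n) = 1) (hB : B ^ 2 = A ^ n) (hBA : B⁻¹ * A * B = A⁻¹)

theorem lift_a_intCast (k : ℤ) : lift A B hA hB hBA (a k) = A ^ k :=
  (congrArg Additive.toMul (ZMod.lift_coe _ _ k)).trans (by simp)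

theorem lift_xa_intCast (k : ℤ) : lift A B hA hB hBA (xa k) = B * A ^ k :=
  congrArg (B * ·) (lift_a_intCast A B hA hB hBA k)

theorem lift_a_one : lift A B hA hB hBA (a 1) = A := by
  simpa using lift_a_intCast A B hA hB hBA 1

theorem lift_xa_zero : lift A B hA hB hBA (xa 0) = B := by
  simpa using lift_xa_intCast A B hA hB hBA 0

theorem lift_injective (hAord : orderOf A = 2 * n) (hAB : ¬Commute A B) :
    Injective (lift A B hA hB hBA) := by
  refine (injective_iff_map_eq_one _).mpr ?_
  rintro (i | i) h <;> obtain ⟨k, rfl⟩ := ZMod.intCast_surjective i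
  · rw [lift_a_intCast, ← orderOf_dvd_iff_zpow_eq_one, hAord] at h
    rw [(ZMod.intCast_zmod_eq_zero_iff_dvd k _).mpr (by exact_mod_cast h), a_zero]
  · rw [lift_xa_intCast, mul_eq_one_iff_eq_inv] at h
    exact absurd (h ▸ ((Commute.refl A).zpow_right k).inv_right) hAB

theorem commute_lift {x : G} (hxA : Commute A x) (hxB : Commute B x) (q : QuaternionGroup n) :
    Commute (lift A B hA hB hBA q) x := by
  rcases q with i | i <;> obtain ⟨k, rfl⟩ := ZMod.intCast_surjective i
  · rw [lift_a_intCast]; exact hxA.zpow_left k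
  · rw [lift_xa_intCast]; exact hxB.mul_left (hxA.zpow_left k)

theorem eq_one_or_eq_a_two_of_commute :
    ∀ q : QuaternionGroup 2, q * a 1 = a 1 * q → q * xa 0 = xa 0 * q → q = 1 ∨ q = a 2 := by
  decide

theorem exists_conj_eq : ∀ s t : QuaternionGroup 2, (s = a 1 ∨ s = (a 1)⁻¹) →
    (t = xa 0 ∨ t = (xa 0)⁻¹) → ∃ q, q * a 1 * q⁻¹ = s ∧ q * xa 0 * q⁻¹ = t := by
  decide

/-- The automorphism of `Q₈` exchanging `i = a 1` and `j = xa 0`. -/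
noncomputable def swapIJ : MulAut (QuaternionGroup 2) :=
  MulEquiv.ofBijective (lift (xa 0) (a 1) (by decide) (by decide) (by decide))
    (Finite.injective_iff_bijective.mp
      (lift_injective _ _ _ _ _ (orderOf_xa 0) fun h ↦ absurd h.eq (by decide)))

theorem swapIJ_a_one : swapIJ (a 1) = xa 0 :=
  (MulEquiv.ofBijective_apply _ _ _).trans (lift_a_one _ _ _ _ _)

theorem swapIJ_a_two : swapIJ (a 2) = a 2 := by
  rw [show (a 2 : QuaternionGroup 2) = a 1 * a 1 from rfl, map_mul, swapIJ_a_one]; rfl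

end QuaternionGroup

section Dedekind

variable {G : Type*} [Group G]

theorem commutatorElement_mem_zpowers_left (hnorm : ∀ x g : G, g * x * g⁻¹ ∈ zpowers x)
    (a b : G) : ⁅a, b⁆ ∈ zpowers a := by
  have h := hnorm a⁻¹ b
  rw [zpowers_inv] at h
  rw [commutatorElement_def, mul_assoc, mul_assoc]
  exact mul_mem (mem_zpowers a) (by simpa only [mul_assoc] using h)

theorem commutatorElement_mem_zpowers_right (hnorm : ∀ x g : G, g * x * g⁻¹ ∈ zpowers x)
    (a b : G) : ⁅a, b⁆ ∈ zpowers b :=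
  mul_mem (hnorm b a) (inv_mem (mem_zpowers b))

theorem commute_commutatorElement_left (hnorm : ∀ x g : G, g * x * g⁻¹ ∈ zpowers x)
    (a b : G) : Commute ⁅a, b⁆ a :=
  ((Commute.refl a).mem_zpowers_right (commutatorElement_mem_zpowers_left hnorm a b)).symm

theorem commute_commutatorElement_right (hnorm : ∀ x g : G, g * x * g⁻¹ ∈ zpowers x)
    (a b : G) : Commute ⁅a, b⁆ b :=
  ((Commute.refl b).mem_zpowers_right (commutatorElement_mem_zpowers_right hnorm a b)).symm

def IsMinNoncommPair (a b : G) : Prop :=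
  ¬Commute a b ∧ ∀ x y : G, ¬Commute x y → orderOf a + orderOf b ≤ orderOf x + orderOf y

theorem exists_isMinNoncommPair (h : ∃ a b : G, ¬Commute a b) :
    ∃ a b : G, IsMinNoncommPair a b := by
  obtain ⟨a, b, hab⟩ := h
  obtain ⟨⟨a, b⟩, hab, hmin⟩ := (measure fun p : G × G ↦ orderOf p.1 + orderOf p.2).wf.has_min
    {p | ¬Commute p.1 p.2} ⟨(a, b), hab⟩
  exact ⟨a, b, hab, fun x y hxy ↦ not_lt.mp (hmin (x, y) hxy)⟩

namespace IsMinNoncommPair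

variable {a b : G}

theorem symm (h : IsMinNoncommPair a b) : IsMinNoncommPair b a :=
  ⟨fun hba ↦ h.1 hba.symm, fun x y hxy ↦ by have := h.2 x y hxy; omega⟩

theorem commute_of_orderOf_lt (h : IsMinNoncommPair a b) {x : G}
    (hx : orderOf x < orderOf a) : Commute x b := by
  by_contra hxb
  have := h.2 x b hxb
  omega

theorem orderOf_le_orderOf_mul (h : IsMinNoncommPair a b) {x : G} (hx : x ∈ zpowers a) :
    orderOf b ≤ orderOf (b * x) := by
  have hne : ¬Commute a (b * x) := fun hc ↦
    h.1 (by simpa using hc.mul_right ((Commute.refl a).mem_zpowers_right hx).inv_right)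
  have := h.2 a (b * x) hne
  omega

theorem false_of_pow_eq_inv (hnorm : ∀ x g : G, g * x * g⁻¹ ∈ zpowers x)
    (h : IsMinNoncommPair a b) {K k : ℕ} (hK0 : 0 < K) (hK : K < orderOf b)
    (hk : (a ^ k) ^ K = (b ^ K)⁻¹) (hc : ⁅a, b⁆ ^ (k * K.choose 2) = 1) : False := by
  have hck : ⁅a ^ k, b⁆ = ⁅a, b⁆ ^ k :=
    commutatorElement_pow_left (commute_commutatorElement_left hnorm a b) k
  have hpow : (b * a ^ k) ^ K = 1 := by
    rw [mul_pow_of_commute_commutatorElement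
      (hck ▸ (commute_commutatorElement_left hnorm a b).pow_pow k k)
      (hck ▸ (commute_commutatorElement_right hnorm a b).pow_left k), hk, hck, ← pow_mul, hc,
      mul_inv_cancel, one_mul]
  have := h.orderOf_le_orderOf_mul (pow_mem (mem_zpowers a) k)
  have := orderOf_le_of_pow_eq_one hK0 hpow
  omega

variable [Finite G]

theorem prime_orderOf_commutator_and_orderOf_eq_pow
    (hnorm : ∀ x g : G, g * x * g⁻¹ ∈ zpowers x) (h : IsMinNoncommPair a b) :
    (orderOf ⁅a, b⁆).Prime ∧ ∃ α, orderOf a = orderOf ⁅a, b⁆ ^ α := by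
  have hc : orderOf ⁅a, b⁆ ≠ 1 := by
    rw [Ne, orderOf_eq_one_iff, commutatorElement_eq_one_iff_commute]; exact h.1
  -- `a ^ q` has smaller order than `a`, so it commutes with `b`, i.e. `⁅a, b⁆ ^ q = ⁅a ^ q, b⁆ = 1`
  have key {q : ℕ} (hq : q.Prime) (hdvd : q ∣ orderOf a) : orderOf ⁅a, b⁆ = q := by
    have hlt : orderOf (a ^ q) < orderOf a := by
      rw [orderOf_pow_of_dvd hq.ne_zero hdvd]
      exact Nat.div_lt_self (orderOf_pos a) hq.one_lt
    have hpow : ⁅a, b⁆ ^ q = 1 := by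
      rw [← commutatorElement_pow_left (commute_commutatorElement_left hnorm a b),
        commutatorElement_eq_one_iff_commute]
      exact h.commute_of_orderOf_lt hlt
    exact ((Nat.dvd_prime hq).mp (orderOf_dvd_of_pow_eq_one hpow)).resolve_left hc
  have ha : orderOf a ≠ 1 := by
    rw [Ne, orderOf_eq_one_iff]; rintro rfl; exact h.1 (Commute.one_left b)
  exact ⟨key (Nat.minFac_prime ha) (Nat.minFac_dvd _) ▸ Nat.minFac_prime ha, _,
    Nat.eq_prime_pow_of_unique_prime_dvd (orderOf_pos a).ne' fun hq hd ↦ (key hq hd).symm⟩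

theorem false_of_mul_dvd (hnorm : ∀ x g : G, g * x * g⁻¹ ∈ zpowers x)
    (h : IsMinNoncommPair a b) {K m : ℕ} (hK0 : 0 < K) (hK : K < orderOf b)
    (hbK : orderOf (b ^ K) ∣ orderOf ⁅a, b⁆) (hm : m * K * orderOf ⁅a, b⁆ ∣ orderOf a)
    (hdvd : orderOf ⁅a, b⁆ ∣ m * K.choose 2) : False := by
  have hmem : (b ^ K)⁻¹ ∈ zpowers (a ^ (m * K)) :=
    zpowers_le.mpr (mem_zpowers_pow_of_mul_orderOf_dvd
      (commutatorElement_mem_zpowers_left hnorm a b) hm)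
      (inv_mem (mem_zpowers_of_orderOf_dvd (pow_mem (mem_zpowers b) K)
        (commutatorElement_mem_zpowers_right hnorm a b) hbK))
  obtain ⟨i, hi⟩ : ∃ i : ℕ, (a ^ (m * K)) ^ i = (b ^ K)⁻¹ :=
    (isOfFinOrder_of_finite _).mem_powers_iff_mem_zpowers.mpr hmem
  obtain ⟨t, ht⟩ := hdvd
  refine h.false_of_pow_eq_inv hnorm hK0 hK (k := m * i) ?_ ?_
  · rw [← hi, ← pow_mul, ← pow_mul]; congr 1; ring
  · rw [show m * i * K.choose 2 = m * K.choose 2 * i by ring, ht, pow_mul, pow_mul,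
      pow_orderOf_eq_one, one_pow, one_pow]

theorem orderOf_eq_four (hnorm : ∀ x g : G, g * x * g⁻¹ ∈ zpowers x)
    (h : IsMinNoncommPair a b) (hle : orderOf b ≤ orderOf a) :
    orderOf a = 4 ∧ orderOf b = 4 := by
  obtain ⟨hp, α, hα⟩ := h.prime_orderOf_commutator_and_orderOf_eq_pow hnorm
  obtain ⟨-, β, hβ⟩ := h.symm.prime_orderOf_commutator_and_orderOf_eq_pow hnorm
  rw [← commutatorElement_inv, orderOf_inv] at hβ
  set p := orderOf ⁅a, b⁆
  have hβα : β ≤ α := (Nat.pow_le_pow_iff_right hp.one_lt).mp (hβ ▸ hα ▸ hle)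
  have hβ2 : 2 ≤ β := by
    by_contra! hβ1
    refine h.1 ((commute_commutatorElement_left hnorm a b).symm.mem_zpowers_right
      (mem_zpowers_of_orderOf_dvd (mem_zpowers b) (commutatorElement_mem_zpowers_right hnorm a b)
        ?_))
    exact hβ ▸ (pow_dvd_pow p (by omega)).trans (pow_one p).dvd
  set K := p ^ (β - 1)
  have hKp : K * p = p ^ β := by rw [← pow_succ, Nat.sub_add_cancel (by omega)]
  have hK0 : 0 < K := pow_pos hp.pos _
  have hKb : K < orderOf b := hβ ▸ Nat.pow_lt_pow_right hp.one_lt (by omega)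
  have hbK : orderOf (b ^ K) ∣ p := by
    rw [orderOf_pow_of_dvd hK0.ne' (hβ ▸ hKp ▸ dvd_mul_right K p), hβ, ← hKp,
      Nat.mul_div_cancel_left _ hK0]
  have hαβ : α = β := by
    by_contra hne
    refine h.false_of_mul_dvd hnorm hK0 hKb hbK (m := p) ?_ (dvd_mul_right p _)
    rw [hα, mul_assoc, hKp, ← pow_succ']
    exact pow_dvd_pow p (by omega)
  have hK2 : K = 2 := by
    by_contra hne
    refine h.false_of_mul_dvd hnorm hK0 hKb hbK (m := 1) (by rw [one_mul, hKp, hα, hαβ]) ?_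
    rw [one_mul]
    exact hp.dvd_choose_pow_iff.mpr ⟨two_ne_zero, Ne.symm hne⟩
  obtain ⟨hp2, hβ1⟩ := Nat.prime_two.pow_eq_iff.mp hK2
  rw [hα, hβ, hαβ, hp2, show β = 2 by omega]
  norm_num

theorem quaternion_relations (hnorm : ∀ x g : G, g * x * g⁻¹ ∈ zpowers x)
    (h : IsMinNoncommPair a b) (ha : orderOf a = 4) (hb : orderOf b = 4) :
    a ^ 2 = b ^ 2 ∧ a⁻¹ * b * a = b⁻¹ := by
  set c := ⁅a, b⁆
  have hca : c ∈ zpowers a := commutatorElement_mem_zpowers_left hnorm a b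
  have hcb : c ∈ zpowers b := commutatorElement_mem_zpowers_right hnorm a b
  have hc : orderOf c = 2 := by
    have hp := (h.prime_orderOf_commutator_and_orderOf_eq_pow hnorm).1
    refine (Nat.prime_dvd_prime_iff_eq hp Nat.prime_two).mp (hp.dvd_of_dvd_pow (n := 2) ?_)
    simpa [ha] using orderOf_dvd_of_mem_zpowers hca
  have hc1 : c ≠ 1 := by rintro h1; rw [h1, orderOf_one] at hc; omega
  have hsq {x : G} (hx : orderOf x = 4) (hcx : c ∈ zpowers x) : x ^ 2 = c := by
    have hx2 : orderOf (x ^ 2) = 2 := by rw [orderOf_pow_of_dvd two_ne_zero (by omega), hx]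
    exact (eq_of_mem_zpowers_of_orderOf_eq_two hx2
      (mem_zpowers_of_orderOf_dvd hcx (pow_mem (mem_zpowers x) 2) (by rw [hc, hx2])) hc1).symm
  have hbab : a * b * a⁻¹ = b⁻¹ := by
    refine eq_inv_of_mul_eq_one_left ?_
    rw [show a * b * a⁻¹ * b = c * b ^ 2 by rw [sq, show c = a * b * a⁻¹ * b⁻¹ from rfl]; group,
      ← hsq hb hcb, ← pow_add]
    exact (hb ▸ pow_orderOf_eq_one b :)
  refine ⟨(hsq ha hca).trans (hsq hb hcb).symm, ?_⟩
  calc a⁻¹ * b * a = (a⁻¹ * b⁻¹ * a)⁻¹ := by group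
    _ = (a⁻¹ * (a * b * a⁻¹) * a)⁻¹ := by rw [hbab]
    _ = b⁻¹ := by group

end IsMinNoncommPair

variable [Finite G]

theorem conj_eq_or_eq_inv_of_orderOf_eq_four (hnorm : ∀ x g : G, g * x * g⁻¹ ∈ zpowers x)
    {x : G} (hx : orderOf x = 4) (g : G) : g * x * g⁻¹ = x ∨ g * x * g⁻¹ = x⁻¹ := by
  have hord : orderOf (g * x * g⁻¹) = 4 := by rw [← MulAut.conj_apply, MulEquiv.orderOf_eq, hx]
  obtain ⟨k, hk⟩ : ∃ k : ℕ, x ^ k = g * x * g⁻¹ :=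
    (isOfFinOrder_of_finite x).mem_powers_iff_mem_zpowers.mpr (hnorm x g)
  rw [← hk, ← pow_mod_orderOf, hx] at hord ⊢
  rw [orderOf_pow, hx] at hord
  have : k % 4 < 4 := Nat.mod_lt _ (by norm_num)
  interval_cases k % 4
  · norm_num at hord
  · simp
  · norm_num at hord
  · exact .inr (eq_inv_of_mul_eq_one_left (by rw [← pow_succ]; exact (hx ▸ pow_orderOf_eq_one x :)))

theorem exists_lift_conj_eq (hnorm : ∀ x g : G, g * x * g⁻¹ ∈ zpowers x) {A B : G}
    (hA4 : A ^ (2 * 2) = 1) (hB : B ^ 2 = A ^ 2) (hBA : B⁻¹ * A * B = A⁻¹) (hA : orderOf A = 4)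
    (hB4 : orderOf B = 4) (g : G) :
    ∃ q, QuaternionGroup.lift A B hA4 hB hBA q * A * (QuaternionGroup.lift A B hA4 hB hBA q)⁻¹ =
        g * A * g⁻¹ ∧
      QuaternionGroup.lift A B hA4 hB hBA q * B * (QuaternionGroup.lift A B hA4 hB hBA q)⁻¹ =
        g * B * g⁻¹ := by
  set ι := QuaternionGroup.lift A B hA4 hB hBA
  have hιa : ι (.a 1) = A := QuaternionGroup.lift_a_one A B hA4 hB hBA
  have hιx : ι (.xa 0) = B := QuaternionGroup.lift_xa_zero A B hA4 hB hBA
  obtain ⟨s, hs, hsA⟩ : ∃ s, (s = .a 1 ∨ s = (.a 1)⁻¹) ∧ ι s = g * A * g⁻¹ := by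
    rcases conj_eq_or_eq_inv_of_orderOf_eq_four hnorm hA g with h | h
    exacts [⟨_, .inl rfl, by rw [hιa, h]⟩, ⟨_, .inr rfl, by rw [map_inv, hιa, h]⟩]
  obtain ⟨t, ht, htB⟩ : ∃ t, (t = .xa 0 ∨ t = (.xa 0)⁻¹) ∧ ι t = g * B * g⁻¹ := by
    rcases conj_eq_or_eq_inv_of_orderOf_eq_four hnorm hB4 g with h | h
    exacts [⟨_, .inl rfl, by rw [hιx, h]⟩, ⟨_, .inr rfl, by rw [map_inv, hιx, h]⟩]
  obtain ⟨q, hqs, hqt⟩ := QuaternionGroup.exists_conj_eq s t hs ht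
  exact ⟨q, by rw [← hsA, ← hqs, ← hιa]; simp, by rw [← htB, ← hqt, ← hιx]; simp⟩

theorem exists_mulAut_apply_eq_of_quaternion (hnorm : ∀ x g : G, g * x * g⁻¹ ∈ zpowers x)
    {A B : G} (hA : orderOf A = 4) (hB : B ^ 2 = A ^ 2) (hBA : B⁻¹ * A * B = A⁻¹)
    (hAB : ¬Commute A B) : ∃ φ : MulAut G, φ A = B := by
  have hA4 : A ^ (2 * 2) = 1 := (hA ▸ pow_orderOf_eq_one A :)
  set ι := QuaternionGroup.lift A B hA4 hB hBA
  have hιa : ι (.a 1) = A := QuaternionGroup.lift_a_one A B hA4 hB hBA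
  have hιx : ι (.xa 0) = B := QuaternionGroup.lift_xa_zero A B hA4 hB hBA
  have hB4 : orderOf B = 4 := by
    have hA2 : A ^ 2 ≠ 1 := fun h ↦ by have := orderOf_le_of_pow_eq_one two_pos h; omega
    exact orderOf_eq_prime_pow (p := 2) (n := 1) (by rwa [pow_one, hB])
      (by rw [show 2 ^ (1 + 1) = 2 * 2 from rfl, pow_mul, hB, ← pow_mul, hA4])
  have hcomm (q : QuaternionGroup 2) (x : G) (hx : x ∈ centralizer {A, B}) : Commute (ι q) x :=
    QuaternionGroup.commute_lift A B hA4 hB hBA (mem_centralizer_iff.mp hx A (by simp))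
      (mem_centralizer_iff.mp hx B (by simp)) q
  have hgen (g : G) : ∃ q, ∃ x ∈ centralizer {A, B}, ι q * x = g := by
    obtain ⟨q, hqA, hqB⟩ := exists_lift_conj_eq hnorm hA4 hB hBA hA hB4 g
    refine ⟨q, (ι q)⁻¹ * g, mem_centralizer_iff.mpr ?_, mul_inv_cancel_left _ _⟩
    rintro _ (rfl | rfl)
    exacts [commute_inv_mul_of_conj_eq hqA, commute_inv_mul_of_conj_eq hqB]
  have hfix (q : QuaternionGroup 2) (hq : ι q ∈ centralizer {A, B}) :
      QuaternionGroup.swapIJ q = q := by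
    have h1 := mem_centralizer_iff.mp hq A (by simp)
    have h2 := mem_centralizer_iff.mp hq B (by simp)
    rw [← hιa, ← map_mul, ← map_mul] at h1
    rw [← hιx, ← map_mul, ← map_mul] at h2
    have hι := QuaternionGroup.lift_injective A B hA4 hB hBA hA hAB
    rcases QuaternionGroup.eq_one_or_eq_a_two_of_commute q (hι h1).symm (hι h2).symm with
      rfl | rfl
    exacts [map_one _, QuaternionGroup.swapIJ_a_two]
  obtain ⟨φ, hφ⟩ := exists_mulAut_extend_of_centralProduct ι (centralizer {A, B}) hcomm hgen
    QuaternionGroup.swapIJ hfix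
  exact ⟨φ, by rw [← hιa, hφ, QuaternionGroup.swapIJ_a_one, hιx]⟩

theorem exists_mulAut_apply_notMem_zpowers_of_not_commute
    (hnorm : ∀ x g : G, g * x * g⁻¹ ∈ zpowers x) (hG : ∃ a b : G, ¬Commute a b) :
    ∃ (φ : MulAut G) (g : G), φ g ∉ zpowers g := by
  obtain ⟨a, b, h⟩ := exists_isMinNoncommPair hG
  wlog hle : orderOf b ≤ orderOf a generalizing a b
  · exact this b a h.symm (le_of_not_ge hle)
  obtain ⟨ha, hb⟩ := h.orderOf_eq_four hnorm hle
  obtain ⟨hsq, hrel⟩ := h.quaternion_relations hnorm ha hb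
  obtain ⟨φ, hφ⟩ := exists_mulAut_apply_eq_of_quaternion hnorm hb hsq hrel fun hc ↦ h.1 hc.symm
  exact ⟨φ, b, fun hmem ↦ h.1 ((Commute.refl b).mem_zpowers_right (hφ ▸ hmem)).symm⟩

end Dedekind

theorem exists_mulAut_apply_notMem_zpowers {G : Type*} [Group G] [Finite G]
    (hG : ¬IsCyclic G) : ∃ (φ : MulAut G) (g : G), φ g ∉ zpowers g := by
  by_cases hcomm : ∀ a b : G, Commute a b
  · let _ : CommGroup G := { mul_comm := hcomm }
    obtain ⟨ψ, x, hx⟩ := AddCommGroup.exists_addAut_apply_notMem_zmultiples (M := Additive G)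
      (by rwa [isAddCyclic_additive_iff])
    exact ⟨MulEquiv.toAdditive.symm ψ, x.toMul, hx⟩
  push Not at hcomm
  by_cases hnorm : ∀ x g : G, g * x * g⁻¹ ∈ zpowers x
  · exact exists_mulAut_apply_notMem_zpowers_of_not_commute hnorm hcomm
  push Not at hnorm
  obtain ⟨x, g, hx⟩ := hnorm
  exact ⟨MulAut.conj g, x, hx⟩

/-- A finite non-cyclic group has a subgroup which is not characteristic: there are a
subgroup `H ≤ G` and an automorphism `φ` of `G` with `φ(H) ≠ H`. -/
theorem exists_non_characteristic_subgroup {G : Type*} [Group G] [Finite G]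
    (hG : ¬IsCyclic G) :
    ∃ (H : Subgroup G) (φ : MulAut G), H.map φ.toMonoidHom ≠ H := by
  obtain ⟨φ, g, hg⟩ := exists_mulAut_apply_notMem_zpowers hG
  exact ⟨zpowers g, φ, fun h ↦ hg (h ▸ mem_map_of_mem _ (mem_zpowers g))⟩
end

section
/- Let G be a finite group, F a field, and A a subalgebra of the group algebra F[G]. Then A is a PS-ring if and only if A is closed under the Hadamard product ∘ and under the map x ↦ x^{(-1)}. -/
/-!
Viewing elements of `F[G]` as functions `G → F`, closure under `∘` makes `A` a space of functions
closed under pointwise multiplication. Call `g` and `h` equivalent when every `x ∈ A` has the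
same coefficient at `g` and at `h`; the PS-basis consists of the classes on which some element
of `A` is nonzero. Every `x ∈ A` is constant on these classes and vanishes off them, so `A` lies in
the span of their simple quantities; conversely, multiplying elements of `A` that separate `g` from
the points outside its class produces a multiple of the simple quantity of that class. Closure
under `x ↦ x^{(-1)}` maps classes to classes. The forward direction reduces, by bilinearity, to
`T̄ᵢ ∘ T̄ⱼ = δᵢⱼ T̄ᵢ` and `T̄ᵢ^{(-1)} = T̄ⱼ`.
-/

open scoped Classical

noncomputable section

/-- The Hadamard (pointwise) product on the group algebra. -/
def had {F : Type*} [Field F] {G : Type*} [Group G] (x y : MonoidAlgebra F G) :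
    MonoidAlgebra F G :=
  MonoidAlgebra.ofCoeff (Finsupp.zipWith (· * ·) (mul_zero 0) x.coeff y.coeff)

/-- `x ↦ x^{(-1)}`, sending `∑ a_g g` to `∑ a_g g⁻¹`. -/
def invol {F : Type*} [Field F] {G : Type*} [Group G] (x : MonoidAlgebra F G) :
    MonoidAlgebra F G :=
  MonoidAlgebra.ofCoeff (Finsupp.mapDomain (fun g => g⁻¹) x.coeff)

/-- The simple quantity `C̄ = ∑_{g ∈ C} g` of a subset `C ⊆ G`. -/
def sqty (F : Type*) [Field F] {G : Type*} [Group G] [Fintype G] (C : Set G) :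
    MonoidAlgebra F G :=
  ∑ g ∈ Finset.univ.filter (· ∈ C), MonoidAlgebra.single g (1 : F)

/-- A (not necessarily unital) subalgebra `A` of `F[G]` is a pseudo-S-ring if there are
disjoint nonempty subsets `T_1, …, T_k` of `G` whose simple quantities form an `F`-basis
of `A` (linearly independent and spanning), such that each `T_i^{(-1)}` is some `T_j`. -/
def IsPSRing {F : Type*} [Field F] {G : Type*} [Group G] [Fintype G]
    (A : NonUnitalSubalgebra F (MonoidAlgebra F G)) : Prop :=
  ∃ (k : ℕ) (T : Fin k → Set G),
    (∀ i, (T i).Nonempty) ∧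
    (∀ i j, i ≠ j → Disjoint (T i) (T j)) ∧
    LinearIndependent F (fun i => sqty F (T i)) ∧
    (A : Set (MonoidAlgebra F G)) =
      (Submodule.span F (Set.range fun i => sqty F (T i)) : Set (MonoidAlgebra F G)) ∧
    (∀ i, ∃ j, (fun g => g⁻¹) '' T i = T j)

open Function Submodule Set
open scoped Pointwise

section Hadamard

variable {F : Type*} [Field F] {G : Type*} [Group G]

@[simp]
theorem coeff_had (x y : MonoidAlgebra F G) (g : G) :
    (had x y).coeff g = x.coeff g * y.coeff g :=
  rfl

@[simp]
theorem coeff_invol (x : MonoidAlgebra F G) (g : G) : (invol x).coeff g = x.coeff g⁻¹ := by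
  simpa [invol] using Finsupp.mapDomain_apply inv_injective x.coeff g⁻¹

variable (F G) in
def hadₗ : MonoidAlgebra F G →ₗ[F] MonoidAlgebra F G →ₗ[F] MonoidAlgebra F G :=
  LinearMap.mk₂ F had (fun _ _ _ => by ext; simp [add_mul]) (fun _ _ _ => by ext; simp [mul_assoc])
    (fun _ _ _ => by ext; simp [mul_add]) (fun _ _ _ => by ext; simp [mul_left_comm])

variable (F G) in
def involₗ : MonoidAlgebra F G →ₗ[F] MonoidAlgebra F G where
  toFun := invol
  map_add' _ _ := by ext; simp
  map_smul' _ _ := by ext; simp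

theorem had_mem_span {S : Set (MonoidAlgebra F G)} (hS : ∀ a ∈ S, ∀ b ∈ S, had a b ∈ span F S)
    {x y : MonoidAlgebra F G} (hx : x ∈ span F S) (hy : y ∈ span F S) : had x y ∈ span F S := by
  have hle : map₂ (hadₗ F G) (span F S) (span F S) ≤ span F S := by
    rw [map₂_span_span, span_le]
    exact image2_subset_iff.mpr hS
  exact hle (apply_mem_map₂ (hadₗ F G) hx hy)

theorem invol_mem_span {S : Set (MonoidAlgebra F G)} (hS : ∀ a ∈ S, invol a ∈ span F S)
    {x : MonoidAlgebra F G} (hx : x ∈ span F S) : invol x ∈ span F S := by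
  have hle : (span F S).map (involₗ F G) ≤ span F S := by
    rw [map_span, span_le]
    rintro _ ⟨a, ha, rfl⟩
    exact hS a ha
  exact hle (mem_map_of_mem hx)

end Hadamard

section SimpleQuantity

variable {F : Type*} [Field F] {G : Type*} [Group G] [Fintype G]

@[simp]
theorem coeff_sqty (C : Set G) (g : G) : (sqty F C).coeff g = C.indicator 1 g := by
  simp [sqty, Finsupp.single_apply, Set.indicator_apply]

theorem had_sqty_sqty (C D : Set G) : had (sqty F C) (sqty F D) = sqty F (C ∩ D) := by
  ext g
  simp [Set.inter_indicator_one]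

theorem invol_sqty (C : Set G) : invol (sqty F C) = sqty F ((fun g => g⁻¹) '' C) := by
  ext g
  simp [Set.indicator_apply]

theorem sqty_empty : sqty F (∅ : Set G) = 0 := by
  ext g
  simp

variable {A : NonUnitalSubalgebra F (MonoidAlgebra F G)}

theorem closed_of_isPSRing (hA : IsPSRing A) :
    (∀ x ∈ A, ∀ y ∈ A, had x y ∈ A) ∧ (∀ x ∈ A, invol x ∈ A) := by
  obtain ⟨k, T, -, hdisj, -, hspan, hinv⟩ := hA
  simp only [← SetLike.mem_coe, hspan]
  refine ⟨fun x hx y hy => had_mem_span ?_ hx hy, fun x hx => invol_mem_span ?_ hx⟩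
  · rintro _ ⟨i, rfl⟩ _ ⟨j, rfl⟩
    rw [had_sqty_sqty]
    obtain rfl | hij := eq_or_ne i j
    · rw [inter_self]
      exact subset_span ⟨i, rfl⟩
    · rw [(hdisj i j hij).inter_eq, sqty_empty]
      exact zero_mem _
  · rintro _ ⟨i, rfl⟩
    obtain ⟨j, hj⟩ := hinv i
    rw [invol_sqty, hj]
    exact subset_span ⟨j, rfl⟩

theorem linearIndependent_sqty {ι : Type*} {T : ι → Set G} (hne : ∀ i, (T i).Nonempty)
    (hdisj : Pairwise (Disjoint on T)) : LinearIndependent F fun i => sqty F (T i) := by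
  refine linearIndependent_iff'.mpr fun s c hc i hi => ?_
  obtain ⟨g, hg⟩ := hne i
  have hcoeff := congrArg (fun x : MonoidAlgebra F G => x.coeff g) hc
  simp only [MonoidAlgebra.coeff_sum, MonoidAlgebra.coeff_smul, Finsupp.finsetSum_apply,
    Finsupp.smul_apply, coeff_sqty, MonoidAlgebra.coeff_zero, Finsupp.zero_apply] at hcoeff
  rwa [Finset.sum_eq_single i (fun j _ hji => by
    simp [indicator_of_notMem ((hdisj hji).notMem_of_mem_right hg)]) (absurd hi),
    indicator_of_mem hg, Pi.one_apply, smul_eq_mul, mul_one] at hcoeff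

theorem isPSRing_of_finite {ι : Type*} [Finite ι] (T : ι → Set G) (hne : ∀ i, (T i).Nonempty)
    (hdisj : Pairwise (Disjoint on T))
    (hspan : (A : Set (MonoidAlgebra F G)) = span F (range fun i => sqty F (T i)))
    (hinv : ∀ i, ∃ j, (fun g => g⁻¹) '' T i = T j) : IsPSRing A := by
  let e := (Finite.equivFin ι).symm
  refine ⟨Nat.card ι, T ∘ e, fun i => hne (e i), fun i j hij => hdisj (e.injective.ne hij),
    (linearIndependent_sqty hne hdisj).comp e e.injective, ?_, fun i => ?_⟩
  · rw [hspan, ← e.surjective.range_comp]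
    rfl
  · obtain ⟨j, hj⟩ := hinv (e i)
    exact ⟨e.symm j, by simpa using hj⟩

end SimpleQuantity

section BasicSets

variable {F : Type*} [Field F] {G : Type*} [Group G]

variable (A : NonUnitalSubalgebra F (MonoidAlgebra F G))

def coeffSupport : Set G :=
  {g | ∃ x ∈ A, x.coeff g ≠ 0}

def basicSet (g : G) : Set G :=
  {h | ∀ x ∈ A, x.coeff h = x.coeff g}

def basicSets : Set (Set G) :=
  basicSet A '' coeffSupport A

variable {A}

theorem mem_coeffSupport_of_coeff_ne_zero {x : MonoidAlgebra F G} (hx : x ∈ A) {g : G}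
    (hg : x.coeff g ≠ 0) : g ∈ coeffSupport A :=
  ⟨x, hx, hg⟩

theorem mem_basicSet_self (g : G) : g ∈ basicSet A g :=
  fun _ _ => rfl

theorem basicSet_eq_of_mem {g h : G} (hh : h ∈ basicSet A g) : basicSet A h = basicSet A g :=
  Set.ext fun p => forall₂_congr fun x hx => by rw [hh x hx]

theorem pairwise_disjoint_basicSets : Pairwise (Disjoint on ((↑) : basicSets A → Set G)) := by
  intro B C hne
  obtain ⟨g, -, hgB⟩ := B.2
  obtain ⟨h, -, hhC⟩ := C.2
  refine disjoint_left.mpr fun p hpB hpC => hne (Subtype.ext ?_)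
  rw [← hgB] at hpB ⊢
  rw [← hhC] at hpC ⊢
  rw [← basicSet_eq_of_mem hpB, ← basicSet_eq_of_mem hpC]

theorem exists_mem_coeff_ne_zero_and_eq_zero (hhad : ∀ x ∈ A, ∀ y ∈ A, had x y ∈ A) {g : G}
    (hg : g ∈ coeffSupport A) (s : Finset G) (hs : ∀ h ∈ s, h ∉ basicSet A g) :
    ∃ z ∈ A, z.coeff g ≠ 0 ∧ ∀ h ∈ s, z.coeff h = 0 := by
  induction s using Finset.induction_on with
  | empty =>
    obtain ⟨z, hz, hzg⟩ := hg
    exact ⟨z, hz, hzg, by simp⟩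
  | insert h s _ ih =>
    obtain ⟨z, hz, hzg, hzs⟩ := ih fun h' hh' => hs h' (Finset.mem_insert_of_mem hh')
    obtain ⟨x, hx, hxh⟩ : ∃ x ∈ A, x.coeff h ≠ x.coeff g := by
      simpa [basicSet] using hs h (Finset.mem_insert_self h s)
    -- `had x z - x h • z` has coefficient `(x g - x h) z g` at `g`, and vanishes at `h` and on `s`
    refine ⟨had x z - x.coeff h • z,
      A.sub_mem (hhad x hx z hz) (SMulMemClass.smul_mem _ hz), ?_, ?_⟩
    · simpa [sub_mul] using mul_ne_zero (sub_ne_zero.mpr hxh.symm) hzg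
    · intro h' hh'
      rcases Finset.mem_insert.mp hh' with rfl | hh'
      · simp
      · simp [hzs h' hh']

theorem inv_mem_coeffSupport (hinv : ∀ x ∈ A, invol x ∈ A) {g : G} (hg : g ∈ coeffSupport A) :
    g⁻¹ ∈ coeffSupport A := by
  obtain ⟨x, hx, hxg⟩ := hg
  exact mem_coeffSupport_of_coeff_ne_zero (hinv x hx) (by rwa [coeff_invol, inv_inv])

theorem image_inv_basicSet (hinv : ∀ x ∈ A, invol x ∈ A) (g : G) :
    (fun h => h⁻¹) '' basicSet A g = basicSet A g⁻¹ := by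
  ext h
  rw [image_inv_eq_inv, mem_inv]
  constructor
  · intro H x hx
    simpa using H _ (hinv x hx)
  · intro H x hx
    simpa using H _ (hinv x hx)

variable [Fintype G]

theorem sqty_basicSet_mem (hhad : ∀ x ∈ A, ∀ y ∈ A, had x y ∈ A) {g : G}
    (hg : g ∈ coeffSupport A) : sqty F (basicSet A g) ∈ A := by
  obtain ⟨z, hz, hzg, hzs⟩ := exists_mem_coeff_ne_zero_and_eq_zero hhad hg
    (Finset.univ.filter (· ∉ basicSet A g)) (by simp)
  have hsqty : sqty F (basicSet A g) = (z.coeff g)⁻¹ • z := by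
    ext h
    by_cases hh : h ∈ basicSet A g
    · simp [hh, hh z hz, hzg]
    · simp [hh, hzs h (by simp [hh])]
  rw [hsqty]
  exact SMulMemClass.smul_mem _ hz

theorem had_sqty_basicSet {x : MonoidAlgebra F G} (hx : x ∈ A) (g : G) :
    had x (sqty F (basicSet A g)) = x.coeff g • sqty F (basicSet A g) := by
  ext h
  by_cases hh : h ∈ basicSet A g
  · simp [hh, hh x hx]
  · simp [hh]

theorem eq_sum_had_sqty_basicSets {x : MonoidAlgebra F G} (hx : x ∈ A) :
    x = ∑ B : basicSets A, had x (sqty F B) := by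
  ext g
  simp only [MonoidAlgebra.coeff_sum, Finsupp.finsetSum_apply, coeff_had, coeff_sqty]
  rw [← Finset.mul_sum, ← Finset.indicator_biUnion_apply _ _
    fun B _ C _ hBC => pairwise_disjoint_basicSets hBC]
  by_cases hg : x.coeff g = 0
  · simp [hg]
  · have hmem : g ∈ ⋃ B ∈ (Finset.univ : Finset (basicSets A)), (B : Set G) :=
      mem_iUnion₂.mpr ⟨⟨_, g, mem_coeffSupport_of_coeff_ne_zero hx hg, rfl⟩, Finset.mem_univ _,
        mem_basicSet_self g⟩
    rw [indicator_of_mem hmem, Pi.one_apply, mul_one]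

theorem coe_eq_span_sqty_basicSets (hhad : ∀ x ∈ A, ∀ y ∈ A, had x y ∈ A) :
    (A : Set (MonoidAlgebra F G)) = span F (range fun B : basicSets A => sqty F (B : Set G)) := by
  refine Subset.antisymm (fun x hx => ?_) ?_
  · rw [SetLike.mem_coe, eq_sum_had_sqty_basicSets hx]
    refine sum_mem fun B _ => ?_
    obtain ⟨g, -, hgB⟩ := B.2
    rw [← hgB, had_sqty_basicSet hx]
    exact smul_mem _ _ (subset_span ⟨B, congrArg (sqty F) hgB.symm⟩)
  · rw [← NonUnitalSubalgebra.coe_toSubmodule, SetLike.coe_subset_coe, span_le]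
    rintro _ ⟨⟨_, g, hg, rfl⟩, rfl⟩
    exact sqty_basicSet_mem hhad hg

theorem isPSRing_of_closed (hhad : ∀ x ∈ A, ∀ y ∈ A, had x y ∈ A)
    (hinv : ∀ x ∈ A, invol x ∈ A) : IsPSRing A := by
  refine isPSRing_of_finite ((↑) : basicSets A → Set G) (fun B => ?_) pairwise_disjoint_basicSets
    (coe_eq_span_sqty_basicSets hhad) fun B => ?_
  · obtain ⟨g, -, hgB⟩ := B.2
    exact ⟨g, hgB ▸ mem_basicSet_self g⟩
  · obtain ⟨g, hg, hgB⟩ := B.2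
    exact ⟨⟨_, g⁻¹, inv_mem_coeffSupport hinv hg, rfl⟩, by rw [← hgB, image_inv_basicSet hinv]⟩

end BasicSets

/-- A subalgebra `A` of `F[G]` is a PS-ring if and only if `A` is closed under the
Hadamard product and under `x ↦ x^{(-1)}`. -/
theorem isPSRing_iff_closed {F : Type*} [Field F] {G : Type*} [Group G] [Fintype G]
    (A : NonUnitalSubalgebra F (MonoidAlgebra F G)) :
    IsPSRing A ↔ ((∀ x ∈ A, ∀ y ∈ A, had x y ∈ A) ∧ (∀ x ∈ A, invol x ∈ A)) :=
  ⟨closed_of_isPSRing, fun ⟨hhad, hinv⟩ => isPSRing_of_closed hhad hinv⟩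
end
end

section
/- Let a = (a_1,…,a_n) be an integer tuple with 0 ≤ a_i ≤ λ_i for all i. Then the regular subgroup R(a) of G = Z_{p^{λ_1}} × ⋯ × Z_{p^{λ_n}} is a characteristic subgroup of G if and only if a is canonical. -/
/-- A tuple `a` is canonical (w.r.t. `λ`) if `a_i ≤ a_{i+1}` and
`a_{i+1} − a_i ≤ λ_{i+1} − λ_i` for all consecutive indices. -/
def Canonical {n : ℕ} (lam a : Fin n → ℕ) : Prop :=
  ∀ i j : Fin n, (j : ℕ) = (i : ℕ) + 1 → a i ≤ a j ∧ a j + lam i ≤ a i + lam j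

/-- The regular subgroup `R(a) = {g ∈ G : p^{a_i} ⬝ g_i = 0 for all i}` of
`G = Z_{p^{λ_1}} × ⋯ × Z_{p^{λ_n}}`. -/
def R (p : ℕ) {n : ℕ} (lam : Fin n → ℕ) (a : Fin n → ℕ) :
    AddSubgroup (∀ i : Fin n, ZMod (p ^ lam i)) where
  carrier := {g | ∀ i, ((p ^ a i : ℕ) : ZMod (p ^ lam i)) * g i = 0}
  zero_mem' := fun i => by rw [Pi.zero_apply, mul_zero]
  add_mem' := fun {g} {h} hg hh i => by
    rw [Pi.add_apply, mul_add, hg i, hh i, add_zero]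
  neg_mem' := fun {g} hg i => by rw [Pi.neg_apply, mul_neg, hg i, neg_zero]

/-!
An endomorphism of `G` is a matrix of homomorphisms `f : ℤ/p^{λ_s} → ℤ/p^{λ_t}`, and such an `f`
sends the `p^{a_s}`-torsion, which is `p^{λ_s - a_s} ℤ/p^{λ_s}`, into the `p^{a_t}`-torsion as soon
as `min(λ_s, λ_t) + a_s ≤ a_t + λ_s`: every element in the image of `f` is killed by
`p^{min(λ_s, λ_t)}`. So this inequality for all `s, t` makes `R(a)` invariant under all
endomorphisms. Conversely, for `s ≠ t` the shear `g ↦ g + f(g_s) e_t` is an automorphism, and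
taking for `f` the map `1 ↦ p^{λ_t - min(λ_s, λ_t)}` and `g = p^{λ_s - a_s} e_s` shows that the
inequality is forced. For monotone `λ` it is equivalent to `a` and `λ - a` being monotone, i.e.
to `a` being canonical.
-/

namespace ZMod

lemma pow_nsmul_one_eq_zero_iff {p : ℕ} (hp : 1 < p) {l k : ℕ} :
    p ^ k • (1 : ZMod (p ^ l)) = 0 ↔ l ≤ k := by
  rw [nsmul_eq_mul, mul_one, natCast_eq_zero_iff, Nat.pow_dvd_pow_iff_le_right hp]

lemma exists_eq_nsmul_of_nsmul_eq_zero {N d : ℕ} [NeZero N] (hd : d ∣ N) {x : ZMod N}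
    (hx : d • x = 0) : ∃ y : ZMod N, x = (N / d) • y := by
  obtain ⟨e, rfl⟩ := hd
  have hd0 : d ≠ 0 := left_ne_zero_of_mul (NeZero.ne (d * e))
  have hdvd : d * e ∣ d * x.val := by
    rw [← natCast_eq_zero_iff, Nat.cast_mul, natCast_zmod_val, ← nsmul_eq_mul, hx]
  obtain ⟨u, hu⟩ := (Nat.mul_dvd_mul_iff_left (Nat.pos_of_ne_zero hd0)).mp hdvd
  refine ⟨u, ?_⟩
  rw [Nat.mul_div_cancel_left e (Nat.pos_of_ne_zero hd0), nsmul_eq_mul, ← Nat.cast_mul, ← hu,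
    natCast_zmod_val]

lemma exists_addMonoidHom_apply_one {N : ℕ} {A : Type*} [AddCommGroup A] {c : A}
    (hc : N • c = 0) : ∃ f : ZMod N →+ A, f 1 = c :=
  ⟨lift N ⟨zmultiplesHom A c, by simpa using hc⟩,
    by simpa using lift_coe N ⟨zmultiplesHom A c, _⟩ 1⟩

lemma pow_nsmul_map_eq_zero {p : ℕ} [NeZero p] {B : Type*} [AddCommGroup B] {l m a b : ℕ}
    (hB : ∀ z : B, p ^ m • z = 0) (f : ZMod (p ^ l) →+ B) {x : ZMod (p ^ l)} (ha : a ≤ l)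
    (hx : p ^ a • x = 0) (hab : min l m + a ≤ b + l) : p ^ b • f x = 0 := by
  obtain ⟨y, rfl⟩ := exists_eq_nsmul_of_nsmul_eq_zero (pow_dvd_pow p ha) hx
  have hy : p ^ min l m • f y = 0 := by
    rcases min_choice l m with h | h <;> rw [h]
    · rw [← map_nsmul, ZModModule.char_nsmul_eq_zero, map_zero]
    · exact hB _
  obtain ⟨c, hc⟩ := pow_dvd_pow p (show min l m ≤ b + (l - a) by omega)
  rw [Nat.pow_div ha (NeZero.pos p), map_nsmul, ← mul_nsmul', ← pow_add, hc, mul_comm,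
    mul_nsmul', hy, nsmul_zero]

end ZMod

def AddAut.shear {G : Type*} [AddCommGroup G] (E : G →+ G) (hE : ∀ g, E (E g) = 0) :
    AddAut G where
  toFun g := g + E g
  invFun g := g - E g
  left_inv g := by simp only [map_add, hE]; abel
  right_inv g := by simp only [map_sub, hE]; abel
  map_add' x y := by simp only [map_add]; abel

@[simp]
lemma AddAut.shear_apply {G : Type*} [AddCommGroup G] (E : G →+ G) (hE : ∀ g, E (E g) = 0)
    (g : G) : shear E hE g = g + E g :=
  rfl

section Canonical

variable {n : ℕ} {lam a : Fin n → ℕ}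

lemma canonical_iff_monotone (ha : ∀ i, a i ≤ lam i) :
    Canonical lam a ↔ Monotone a ∧ Monotone (fun i ↦ lam i - a i) := by
  simp only [monotone_iff_forall_covBy, Fin.covBy_iff, Nat.covBy_iff_add_one_eq, Canonical]
  constructor
  · intro h
    exact ⟨fun i j hij ↦ (h i j hij.symm).1,
      fun i j hij ↦ by have := h i j hij.symm; have := ha i; have := ha j; omega⟩
  · rintro ⟨h₁, h₂⟩ i j hij
    have := h₂ i j hij.symm
    have := ha i
    have := ha j
    exact ⟨h₁ i j hij.symm, by omega⟩

lemma canonical_iff_forall_min_add_le (hmono : Monotone lam) (ha : ∀ i, a i ≤ lam i) :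
    Canonical lam a ↔ ∀ s t, min (lam s) (lam t) + a s ≤ a t + lam s := by
  rw [canonical_iff_monotone ha]
  constructor
  · rintro ⟨h₁, h₂⟩ s t
    rcases le_total s t with hst | hts
    · have := h₁ hst
      omega
    · have : lam t - a t ≤ lam s - a s := h₂ hts
      have := hmono hts
      have := ha s
      have := ha t
      omega
  · intro h
    refine ⟨fun s t hst ↦ ?_, fun s t hst ↦ ?_⟩
    · have := h s t
      have := hmono hst
      omega
    · have := h t s
      have := hmono hst
      have := ha s
      have := ha t
      show lam s - a s ≤ lam t - a t
      omega

end Canonical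

namespace R

variable {p n : ℕ} {lam a : Fin n → ℕ}

lemma mem_iff_nsmul {g : ∀ i : Fin n, ZMod (p ^ lam i)} :
    g ∈ R p lam a ↔ ∀ i, p ^ a i • g i = 0 := by
  simp only [nsmul_eq_mul]
  rfl

lemma single_mem {s : Fin n} {x : ZMod (p ^ lam s)} (hx : p ^ a s • x = 0) :
    Pi.single s x ∈ R p lam a := by
  rw [mem_iff_nsmul]
  intro i
  rcases eq_or_ne i s with rfl | hi
  · simpa using hx
  · simp [Pi.single_eq_of_ne hi]

lemma map_mem_of_forall_min_add_le [NeZero p] (ha : ∀ i, a i ≤ lam i)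
    (h : ∀ s t, min (lam s) (lam t) + a s ≤ a t + lam s)
    (φ : (∀ i : Fin n, ZMod (p ^ lam i)) →+ ∀ i : Fin n, ZMod (p ^ lam i))
    {g : ∀ i : Fin n, ZMod (p ^ lam i)} (hg : g ∈ R p lam a) : φ g ∈ R p lam a := by
  rw [mem_iff_nsmul] at hg ⊢
  intro t
  rw [← Finset.univ_sum_single g, map_sum, Finset.sum_apply, Finset.smul_sum]
  refine Finset.sum_eq_zero fun s _ ↦ ?_
  exact ZMod.pow_nsmul_map_eq_zero (ZModModule.char_nsmul_eq_zero _)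
    ((Pi.evalAddMonoidHom _ t).comp (φ.comp (AddMonoidHom.single _ s))) (ha s) (hg s) (h s t)

lemma pow_nsmul_map_eq_zero_of_characteristic (hR : (R p lam a).Characteristic) {s t : Fin n}
    (hst : s ≠ t) (f : ZMod (p ^ lam s) →+ ZMod (p ^ lam t)) {x : ZMod (p ^ lam s)}
    (hx : p ^ a s • x = 0) : p ^ a t • f x = 0 := by
  let E := (AddMonoidHom.single (fun i ↦ ZMod (p ^ lam i)) t).comp
    (f.comp (Pi.evalAddMonoidHom (fun i ↦ ZMod (p ^ lam i)) s))
  have hE : ∀ g, E (E g) = 0 := fun g ↦ by simp [E, Pi.single_eq_of_ne hst]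
  have hmem := AddSubgroup.characteristic_iff_le_comap.mp hR (AddAut.shear E hE) (single_mem hx)
  have hcomp : (AddAut.shear E hE (Pi.single s x)) t = f x := by
    simp [E, Pi.single_eq_of_ne hst.symm]
  rw [AddSubgroup.mem_comap, mem_iff_nsmul] at hmem
  simpa [hcomp] using hmem t

lemma min_add_le_of_characteristic (hp : 1 < p) (hR : (R p lam a).Characteristic)
    {s : Fin n} (has : a s ≤ lam s) (t : Fin n) : min (lam s) (lam t) + a s ≤ a t + lam s := by
  rcases eq_or_ne s t with rfl | hst
  · omega
  obtain ⟨f, hf⟩ := ZMod.exists_addMonoidHom_apply_one (N := p ^ lam s)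
    (c := p ^ (lam t - min (lam s) (lam t)) • (1 : ZMod (p ^ lam t))) (by
      rw [← mul_nsmul', ← pow_add, ZMod.pow_nsmul_one_eq_zero_iff hp]
      omega)
  have hx : p ^ a s • p ^ (lam s - a s) • (1 : ZMod (p ^ lam s)) = 0 := by
    rw [← mul_nsmul', ← pow_add, ZMod.pow_nsmul_one_eq_zero_iff hp]
    omega
  have := pow_nsmul_map_eq_zero_of_characteristic hR hst f hx
  rw [map_nsmul, hf, ← mul_nsmul', ← mul_nsmul', ← pow_add, ← pow_add,
    ZMod.pow_nsmul_one_eq_zero_iff hp] at this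
  omega

theorem characteristic_iff (hp : 1 < p) (ha : ∀ i, a i ≤ lam i) :
    (R p lam a).Characteristic ↔ ∀ s t, min (lam s) (lam t) + a s ≤ a t + lam s := by
  have : NeZero p := ⟨by omega⟩
  refine ⟨fun hR s ↦ min_add_le_of_characteristic hp hR (ha s), fun h ↦ ?_⟩
  rw [AddSubgroup.characteristic_iff_le_comap]
  exact fun φ g hg ↦ map_mem_of_forall_min_add_le ha h φ.toAddMonoidHom hg

end R

theorem regular_characteristic_iff_canonical_general (p : ℕ) (hp : p.Prime)
    (n : ℕ) (lam : Fin n → ℕ) (hmono : Monotone lam)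
    (a : Fin n → ℕ) (ha : ∀ i, a i ≤ lam i) :
    (∀ φ : AddAut (∀ i : Fin n, ZMod (p ^ lam i)),
        (R p lam a).map φ.toAddMonoidHom = R p lam a) ↔ Canonical lam a := by
  rw [← AddSubgroup.characteristic_iff_map_eq, R.characteristic_iff hp.one_lt ha,
    canonical_iff_forall_min_add_le hmono ha]

/-- `R(a)` is a characteristic subgroup of `G = Z_{p^{λ_1}} × ⋯ × Z_{p^{λ_n}}` if and only
if the tuple `a` is canonical. -/
theorem regular_characteristic_iff_canonical (p : ℕ) (hp : p.Prime) [NeZero p]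
    (n : ℕ) (hn : 1 ≤ n) (lam : Fin n → ℕ) (hlam : ∀ i, 1 ≤ lam i) (hmono : Monotone lam)
    (a : Fin n → ℕ) (ha : ∀ i, a i ≤ lam i) :
    (∀ φ : AddAut (∀ i : Fin n, ZMod (p ^ lam i)),
        (R p lam a).map φ.toAddMonoidHom = R p lam a) ↔ Canonical lam a :=
  regular_characteristic_iff_canonical_general p hp n lam hmono a ha
end

section
/- Suppose p is an odd prime. Then every characteristic subgroup H of G = Z_{p^{λ_1}} × ⋯ × Z_{p^{λ_n}} is regular: there exists an integer tuple a = (a_1,…,a_n) with 0 ≤ a_i ≤ λ_i for all i such that H = R(a). -/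
theorem AddSubgroup.eq_ker_nsmul_card {G : Type*} [AddCommGroup G] [IsAddCyclic G] [Finite G]
    (P : AddSubgroup G) : P = (nsmulAddMonoidHom (Nat.card P) : G →+ G).ker := by
  refine AddSubgroup.eq_of_le_of_card_ge (fun x hx => ?_) ?_
  · exact congrArg Subtype.val (card_nsmul_eq_zero' (G := P) (x := ⟨x, hx⟩))
  · rw [IsAddCyclic.card_nsmulAddMonoidHom_ker,
      Nat.gcd_eq_right (AddSubgroup.card_addSubgroup_dvd_card P)]

theorem ZMod.exists_mem_addSubgroup_iff_prime_pow_mul_eq_zero {p : ℕ} (hp : p.Prime) (l : ℕ)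
    (P : AddSubgroup (ZMod (p ^ l))) :
    ∃ a ≤ l, ∀ x, x ∈ P ↔ ((p ^ a : ℕ) : ZMod (p ^ l)) * x = 0 := by
  have : NeZero (p ^ l) := ⟨pow_ne_zero _ hp.ne_zero⟩
  have hdvd : Nat.card P ∣ p ^ l := by
    simpa using AddSubgroup.card_addSubgroup_dvd_card P
  obtain ⟨a, hal, hcard⟩ := (Nat.dvd_prime_pow hp).mp hdvd
  refine ⟨a, hal, fun x => ?_⟩
  rw [P.eq_ker_nsmul_card, AddMonoidHom.mem_ker, hcard]
  simp [nsmul_eq_mul]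

theorem nsmul_add_self_of_card_eq {G : Type*} [AddGroup G] {k : ℕ} (hk : Nat.card G = 2 * k + 1)
    (x : G) : (k + 1) • (x + x) = x := by
  rw [← two_nsmul, ← mul_nsmul', show (k + 1) * 2 = Nat.card G + 1 by omega, succ_nsmul,
    card_nsmul_eq_zero', zero_add]

theorem AddSubgroup.single_mem_of_forall_map_eq {ι : Type*} [DecidableEq ι] {G : ι → Type*}
    [∀ i, AddCommGroup (G i)] {H : AddSubgroup (∀ i, G i)}
    (hchar : ∀ φ : AddAut (∀ i, G i), H.map φ.toAddMonoidHom = H) {i : ι}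
    (hodd : Odd (Nat.card (G i))) {g : ∀ i, G i} (hg : g ∈ H) : Pi.single i (g i) ∈ H := by
  let σ : AddAut (∀ j, G j) :=
    AddEquiv.piCongrRight fun j => if j = i then AddEquiv.refl _ else AddEquiv.neg _
  have hσg : σ g ∈ H := hchar σ ▸ AddSubgroup.mem_map_of_mem _ hg
  have hsum : g + σ g = Pi.single i (g i + g i) := by
    funext j
    by_cases hj : j = i
    · subst hj; simp [σ]
    · simp [σ, hj]
  obtain ⟨k, hk⟩ := hodd
  rw [← nsmul_add_self_of_card_eq hk (g i), ← AddMonoidHom.single_apply, map_nsmul,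
    AddMonoidHom.single_apply, ← hsum]
  exact H.nsmul_mem (H.add_mem hg hσg) _

theorem characteristic_subgroup_regular_general (p : ℕ) (hp : p.Prime) (hp2 : p ≠ 2)
    (n : ℕ) (lam : Fin n → ℕ)
    (H : AddSubgroup (∀ i : Fin n, ZMod (p ^ lam i)))
    (hchar : ∀ φ : AddAut (∀ i : Fin n, ZMod (p ^ lam i)), H.map φ.toAddMonoidHom = H) :
    ∃ a : Fin n → ℕ, (∀ i, a i ≤ lam i) ∧ H = R p lam a := by
  have hodd (i : Fin n) : Odd (Nat.card (ZMod (p ^ lam i))) := by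
    rw [Nat.card_zmod]
    exact (hp.odd_of_ne_two hp2).pow
  have hmem (g) : g ∈ H ↔ ∀ i, Pi.single i (g i) ∈ H :=
    ⟨fun hg i => H.single_mem_of_forall_map_eq hchar (hodd i) hg, H.pi_mem_of_single_mem g⟩
  choose a hal ha using fun i => ZMod.exists_mem_addSubgroup_iff_prime_pow_mul_eq_zero hp (lam i)
    (H.comap (AddMonoidHom.single (fun j => ZMod (p ^ lam j)) i))
  exact ⟨a, hal, AddSubgroup.ext fun g => (hmem g).trans (forall_congr' fun i => ha i (g i))⟩

/-- Miller–Baer: for an odd prime `p`, every characteristic subgroup of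
`G = Z_{p^{λ_1}} × ⋯ × Z_{p^{λ_n}}` is regular, i.e. of the form `R(a)` for some tuple
`a` with `0 ≤ a_i ≤ λ_i`. -/
theorem characteristic_subgroup_regular (p : ℕ) (hp : p.Prime) (hp2 : p ≠ 2) [NeZero p]
    (n : ℕ) (hn : 1 ≤ n) (lam : Fin n → ℕ) (hlam : ∀ i, 1 ≤ lam i) (hmono : Monotone lam)
    (H : AddSubgroup (∀ i : Fin n, ZMod (p ^ lam i)))
    (hchar : ∀ φ : AddAut (∀ i : Fin n, ZMod (p ^ lam i)), H.map φ.toAddMonoidHom = H) :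
    ∃ a : Fin n → ℕ, (∀ i, a i ≤ lam i) ∧ H = R p lam a :=
  characteristic_subgroup_regular_general p hp hp2 n lam H hchar
end

section
/- For any prime p, the number of orbits of Aut(G) acting on G = Z_{p^{λ_1}} × ⋯ × Z_{p^{λ_n}} equals ∏_{i=1}^{n} (λ_i − λ_{i−1} + 1), where λ_0 = 0. If moreover p ≠ 2, then the number of characteristic subgroups of G also equals ∏_{i=1}^{n} (λ_i − λ_{i−1} + 1). -/
/-!
Write `G = ∏ᵢ ZMod (p ^ mᵢ)`. Diagonal unit scalings and transvections `xᵢ ↦ xᵢ + f xⱼ` move every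
element to a standard element `(p ^ cᵢ)ᵢ` whose valuation vector `c` is admissible: `c ≤ m` and
`cᵢ ≤ cⱼ + (mᵢ - mⱼ)`, where `mᵢ - mⱼ` is the least amount by which a homomorphism
`ZMod (p ^ mⱼ) → ZMod (p ^ mᵢ)` raises `p`-divisibility. For admissible `c` the box
`∏ᵢ p ^ cᵢ • ZMod (p ^ mᵢ)` is stable under every endomorphism and contains `(p ^ c'ᵢ)ᵢ` exactly
when `c ≤ c'`, so distinct standard elements lie in distinct orbits. For odd `p` the unit `2` shows
that the orbit of `(p ^ cᵢ)ᵢ` generates its box, and a characteristic subgroup `H` is the box of the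
pointwise minimum of the admissible `c` with `(p ^ cᵢ)ᵢ ∈ H`. For `mᵢ = λ (i + 1)` with `λ` increasing
from `λ 0 = 0`, the admissible vectors are the partial sums of steps `dᵢ ∈ [0, λ (i + 1) - λ i]`.
-/

namespace ZMod

variable {p k : ℕ}

theorem isNilpotent_natCast_self_pow : IsNilpotent (p : ZMod (p ^ k)) :=
  ⟨k, natCast_pow_eq_zero_of_le p le_rfl⟩

theorem natCast_pow_dvd_natCast_pow_iff (hp : 1 < p) {a b : ℕ} (ha : a ≤ k) :
    (p : ZMod (p ^ k)) ^ a ∣ (p : ZMod (p ^ k)) ^ b ↔ a ≤ b := by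
  refine ⟨fun ⟨y, hy⟩ => ?_, pow_dvd_pow _⟩
  have : (p : ZMod (p ^ k)) ^ (k - a + b) = 0 := by
    rw [pow_add, hy, ← mul_assoc, ← pow_add, Nat.sub_add_cancel ha,
      natCast_pow_eq_zero_of_le p le_rfl, zero_mul]
  rw [← Nat.cast_pow, natCast_eq_zero_iff, Nat.pow_dvd_pow_iff_le_right hp] at this
  omega

theorem natCast_pow_dvd_of_pow_mul_eq_zero (hp : p ≠ 0) {a : ℕ} {y : ZMod (p ^ k)}
    (h : (p : ZMod (p ^ k)) ^ a * y = 0) : (p : ZMod (p ^ k)) ^ (k - a) ∣ y := by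
  have : NeZero (p ^ k) := ⟨pow_ne_zero _ hp⟩
  rw [← natCast_zmod_val y] at h ⊢
  rw [← Nat.cast_pow, ← Nat.cast_mul, natCast_eq_zero_iff] at h
  rw [← Nat.cast_pow]
  refine Nat.cast_dvd_cast ?_
  rcases le_total a k with hak | hka
  · refine Nat.dvd_of_mul_dvd_mul_left (pow_pos (Nat.pos_of_ne_zero hp) a) ?_
    rwa [← pow_add, Nat.add_sub_cancel' hak]
  · simp [Nat.sub_eq_zero_of_le hka]

theorem natCast_pow_dvd_map_of_dvd (hp : p ≠ 0) {a b c : ℕ} (f : ZMod (p ^ a) →+ ZMod (p ^ b))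
    {x : ZMod (p ^ a)} (hx : (p : ZMod (p ^ a)) ^ c ∣ x) :
    (p : ZMod (p ^ b)) ^ (c + (b - a)) ∣ f x := by
  have : NeZero (p ^ a) := ⟨pow_ne_zero _ hp⟩
  obtain ⟨y, rfl⟩ := hx
  have hf1 : (p : ZMod (p ^ b)) ^ (b - a) ∣ f 1 := by
    refine natCast_pow_dvd_of_pow_mul_eq_zero hp ?_
    rw [← Nat.cast_pow, ← nsmul_eq_mul, ← map_nsmul, nsmul_eq_mul, mul_one, natCast_self,
      map_zero]
  have hfy : f y = (y.val : ZMod (p ^ b)) * f 1 := by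
    rw [← nsmul_eq_mul, ← map_nsmul, nsmul_eq_mul, mul_one, natCast_zmod_val]
  rw [← Nat.cast_pow p c, ← nsmul_eq_mul, map_nsmul, nsmul_eq_mul, Nat.cast_pow, hfy, pow_add]
  exact mul_dvd_mul_left _ (dvd_mul_of_dvd_right hf1 _)

theorem exists_eq_natCast_pow_mul_unit (hp : p.Prime) (x : ZMod (p ^ k)) :
    ∃ v ≤ k, ∃ u : (ZMod (p ^ k))ˣ, x = (p : ZMod (p ^ k)) ^ v * u := by
  have : NeZero (p ^ k) := ⟨pow_ne_zero _ hp.ne_zero⟩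
  by_cases hx : x = 0
  · exact ⟨k, le_rfl, 1, by rw [hx, natCast_pow_eq_zero_of_le p le_rfl, zero_mul]⟩
  obtain ⟨v, r, hr, hxr⟩ :=
    Nat.exists_eq_pow_mul_and_not_dvd ((val_ne_zero x).2 hx) p hp.one_lt.ne'
  have hrk : r.Coprime (p ^ k) := Nat.Coprime.pow_right _ (hp.coprime_iff_not_dvd.2 hr).symm
  have hx' : x = (p : ZMod (p ^ k)) ^ v * unitOfCoprime r hrk := by
    rw [coe_unitOfCoprime, ← natCast_zmod_val x, hxr]
    push_cast; rfl
  refine ⟨v, ?_, _, hx'⟩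
  by_contra! hkv
  exact hx (by rw [hx', natCast_pow_eq_zero_of_le p hkv.le, zero_mul])

def powShiftHom (p a b : ℕ) : ZMod (p ^ a) →+ ZMod (p ^ b) :=
  lift (p ^ a) ⟨zmultiplesHom _ ((p : ZMod (p ^ b)) ^ (b - a)), by
    rw [zmultiplesHom_apply, zsmul_eq_mul]
    push_cast
    rw [← pow_add, natCast_pow_eq_zero_of_le p (by omega)]⟩

theorem powShiftHom_natCast_pow (p a b v : ℕ) :
    powShiftHom p a b ((p : ZMod (p ^ a)) ^ v) = (p : ZMod (p ^ b)) ^ (v + (b - a)) := by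
  have : (p : ZMod (p ^ a)) ^ v = ((p ^ v : ℕ) : ℤ) := by push_cast; rfl
  rw [this, powShiftHom, lift_coe, zmultiplesHom_apply, zsmul_eq_mul, pow_add]
  push_cast; rfl

end ZMod

namespace Pi

variable {ι : Type*} [DecidableEq ι] {A : ι → Type*} [∀ i, AddCommGroup (A i)]

def addTransvection {i j : ι} (hij : j ≠ i) (f : A j →+ A i) : AddAut (∀ k, A k) where
  toFun x := Function.update x i (x i + f (x j))
  invFun x := Function.update x i (x i - f (x j))
  left_inv x := by simp [Function.update_of_ne hij]
  right_inv x := by simp [Function.update_of_ne hij]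
  map_add' x y := by
    ext k
    rcases eq_or_ne k i with rfl | hk
    · simp only [Function.update_self, Pi.add_apply, map_add]
      abel
    · simp [Function.update_of_ne hk]

theorem addTransvection_apply {i j : ι} (hij : j ≠ i) (f : A j →+ A i) (x : ∀ k, A k) :
    addTransvection hij f x = Function.update x i (x i + f (x j)) := rfl

end Pi

abbrev ZModPowPi {ι : Type*} (p : ℕ) (m : ι → ℕ) : Type _ := ∀ i, ZMod (p ^ m i)

namespace ZModPowPi

open AddAction Function

variable {ι : Type*} {p : ℕ} {m : ι → ℕ}

variable (p m) in
def powVec (c : ι → ℕ) : ZModPowPi p m := fun i => (p : ZMod (p ^ m i)) ^ c i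

def IsAdmissible (m c : ι → ℕ) : Prop :=
  c ≤ m ∧ ∀ i j, c i ≤ c j + (m i - m j)

theorem isAdmissible_self : IsAdmissible m m := ⟨le_rfl, fun _ _ => by omega⟩

theorem powVec_self : powVec p m m = 0 := funext fun _ => ZMod.natCast_pow_eq_zero_of_le p le_rfl

theorem powVec_update [DecidableEq ι] (c : ι → ℕ) (i : ι) (w : ℕ) :
    powVec p m (update c i w) = update (powVec p m c) i ((p : ZMod (p ^ m i)) ^ w) := by
  ext k
  rcases eq_or_ne k i with rfl | hk <;> simp [powVec, *]

theorem orbit_mul_units (x : ZModPowPi p m) (u : ∀ i, (ZMod (p ^ m i))ˣ) :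
    orbit (AddAut (ZModPowPi p m)) (fun i => x i * u i) = orbit (AddAut (ZModPowPi p m)) x :=
  orbit_vadd (AddEquiv.piCongrRight fun i => AddAut.mulRight (u i)) x

theorem orbit_update_mul_unit [DecidableEq ι] (x : ZModPowPi p m) (i : ι)
    (u : (ZMod (p ^ m i))ˣ) :
    orbit (AddAut (ZModPowPi p m)) (update x i (x i * u)) = orbit (AddAut (ZModPowPi p m)) x := by
  convert orbit_mul_units x (Pi.mulSingle i u) using 2
  ext k
  rcases eq_or_ne k i with rfl | hk <;> simp [*]

theorem orbit_powVec_update [DecidableEq ι] {c : ι → ℕ} {i j : ι}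
    (hlt : c j + (m i - m j) < c i) :
    orbit (AddAut (ZModPowPi p m)) (powVec p m (update c i (c j + (m i - m j)))) =
      orbit (AddAut (ZModPowPi p m)) (powVec p m c) := by
  have hij : j ≠ i := by rintro rfl; omega
  set w := c j + (m i - m j)
  set x := Pi.addTransvection hij (ZMod.powShiftHom p (m j) (m i)) (powVec p m c) with hx
  have hunit : IsUnit ((p : ZMod (p ^ m i)) ^ (c i - w) + 1) :=
    (ZMod.isNilpotent_natCast_self_pow.pow_of_pos (by omega)).isUnit_add_one
  have hxi : x i * ↑hunit.unit⁻¹ = (p : ZMod (p ^ m i)) ^ w := by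
    rw [Units.mul_inv_eq_iff_eq_mul, IsUnit.unit_spec, mul_add, mul_one, ← pow_add,
      Nat.add_sub_cancel' hlt.le]
    simp [x, Pi.addTransvection_apply, powVec, ZMod.powShiftHom_natCast_pow, w]
  calc orbit (AddAut (ZModPowPi p m)) (powVec p m (update c i w))
      = orbit (AddAut (ZModPowPi p m)) (update x i (x i * ↑hunit.unit⁻¹)) := by
        rw [hxi, powVec_update, hx, Pi.addTransvection_apply, update_idem]
    _ = orbit (AddAut (ZModPowPi p m)) x := orbit_update_mul_unit x i _
    _ = orbit (AddAut (ZModPowPi p m)) (powVec p m c) := orbit_vadd _ _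

theorem exists_isAdmissible_orbit_powVec_eq [Fintype ι] [DecidableEq ι] (v : ι → ℕ)
    (hv : v ≤ m) :
    ∃ c, IsAdmissible m c ∧ orbit (AddAut (ZModPowPi p m)) (powVec p m v) =
      orbit (AddAut (ZModPowPi p m)) (powVec p m c) := by
  induction hs : ∑ i, v i using Nat.strong_induction_on generalizing v with
  | _ s ih =>
    by_cases hadm : ∀ i j, v i ≤ v j + (m i - m j)
    · exact ⟨v, ⟨hv, hadm⟩, rfl⟩
    push Not at hadm
    obtain ⟨i, j, hlt⟩ := hadm
    have hle : update v i (v j + (m i - m j)) ≤ v := update_le_iff.2 ⟨hlt.le, fun _ _ => le_rfl⟩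
    have hsum : ∑ k, update v i (v j + (m i - m j)) k < s :=
      hs ▸ Finset.sum_lt_sum (fun k _ => hle k) ⟨i, Finset.mem_univ _, by simpa using hlt⟩
    obtain ⟨c, hc, horbit⟩ := ih _ hsum _ (hle.trans hv) rfl
    exact ⟨c, hc, (orbit_powVec_update hlt).symm.trans horbit⟩

theorem exists_isAdmissible_orbit_eq [Fintype ι] [DecidableEq ι] (hp : p.Prime)
    (x : ZModPowPi p m) :
    ∃ c, IsAdmissible m c ∧ orbit (AddAut (ZModPowPi p m)) x =
      orbit (AddAut (ZModPowPi p m)) (powVec p m c) := by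
  choose v hv u hx using fun i => ZMod.exists_eq_natCast_pow_mul_unit hp (x i)
  have : x = fun i => powVec p m v i * u i := funext hx
  rw [this, orbit_mul_units]
  exact exists_isAdmissible_orbit_powVec_eq v hv

variable (p m) in
def box (c : ι → ℕ) : AddSubgroup (ZModPowPi p m) :=
  AddSubgroup.pi Set.univ fun i => (Ideal.span {(p : ZMod (p ^ m i)) ^ c i}).toAddSubgroup

theorem mem_box {c : ι → ℕ} {x : ZModPowPi p m} :
    x ∈ box p m c ↔ ∀ i, (p : ZMod (p ^ m i)) ^ c i ∣ x i := by
  simp [box, AddSubgroup.mem_pi, Ideal.mem_span_singleton]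

theorem powVec_mem_box (c : ι → ℕ) : powVec p m c ∈ box p m c :=
  mem_box.2 fun _ => dvd_rfl

theorem box_anti {c c' : ι → ℕ} (h : c ≤ c') : box p m c' ≤ box p m c :=
  fun _ hx => mem_box.2 fun i => (pow_dvd_pow _ (h i)).trans (mem_box.1 hx i)

theorem powVec_mem_box_iff (hp : 1 < p) {c c' : ι → ℕ} (hc : c ≤ m) :
    powVec p m c' ∈ box p m c ↔ c ≤ c' := by
  simp only [mem_box, powVec, ZMod.natCast_pow_dvd_natCast_pow_iff hp (hc _), Pi.le_def]

theorem map_mem_box [Fintype ι] [DecidableEq ι] (hp : p ≠ 0) {c : ι → ℕ}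
    (hc : ∀ i j, c i ≤ c j + (m i - m j)) (f : ZModPowPi p m →+ ZModPowPi p m)
    {x : ZModPowPi p m} (hx : x ∈ box p m c) : f x ∈ box p m c := by
  refine mem_box.2 fun i => ?_
  rw [← Finset.univ_sum_single x, map_sum, Finset.sum_apply]
  refine Finset.dvd_sum fun j _ => ?_
  have := ZMod.natCast_pow_dvd_map_of_dvd hp
    ((Pi.evalAddMonoidHom _ i).comp (f.comp (AddMonoidHom.single _ j))) (mem_box.1 hx j)
  exact (pow_dvd_pow _ (hc i j)).trans this

theorem eq_of_orbit_powVec_eq [Fintype ι] [DecidableEq ι] (hp : 1 < p) {c c' : ι → ℕ}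
    (hc : IsAdmissible m c) (hc' : IsAdmissible m c')
    (h : orbit (AddAut (ZModPowPi p m)) (powVec p m c) =
      orbit (AddAut (ZModPowPi p m)) (powVec p m c')) : c = c' := by
  have key : ∀ {c c'}, IsAdmissible m c → powVec p m c' ∈ orbit (AddAut (ZModPowPi p m))
      (powVec p m c) → c ≤ c' := by
    rintro c c' hc ⟨φ, hφ⟩
    rw [← powVec_mem_box_iff hp hc.1, ← hφ]
    exact map_mem_box (by omega) hc.2 φ.toAddMonoidHom (powVec_mem_box c)
  exact le_antisymm (key hc (h ▸ mem_orbit_self _)) (key hc' (h ▸ mem_orbit_self _))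

theorem card_orbitRel_quotient [Fintype ι] [DecidableEq ι] (hp : p.Prime) :
    Nat.card (orbitRel.Quotient (AddAut (ZModPowPi p m)) (ZModPowPi p m)) =
      Nat.card {c // IsAdmissible m c} := by
  refine (Nat.card_eq_of_bijective (fun c => ⟦powVec p m c.1⟧) ⟨?_, ?_⟩).symm
  · rintro ⟨c, hc⟩ ⟨c', hc'⟩ h
    exact Subtype.ext <| eq_of_orbit_powVec_eq hp.one_lt hc hc' <|
      orbit_eq_iff.2 (orbitRel_apply.1 (Quotient.exact h))
  · rintro ⟨x⟩
    obtain ⟨c, hc, hx⟩ := exists_isAdmissible_orbit_eq hp x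
    exact ⟨⟨c, hc⟩, Quotient.sound (orbitRel_apply.2 (orbit_eq_iff.1 hx.symm))⟩

theorem box_map_eq [Fintype ι] [DecidableEq ι] (hp : p ≠ 0) {c : ι → ℕ}
    (hc : IsAdmissible m c) (φ : AddAut (ZModPowPi p m)) :
    (box p m c).map φ.toAddMonoidHom = box p m c := by
  refine le_antisymm (AddSubgroup.map_le_iff_le_comap.2 fun x hx => ?_) fun x hx => ?_
  · exact map_mem_box hp hc.2 φ.toAddMonoidHom hx
  · exact ⟨φ.symm x, map_mem_box hp hc.2 φ.symm.toAddMonoidHom hx, φ.apply_symm_apply x⟩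

theorem box_injective (hp : 1 < p) {c c' : ι → ℕ} (hc : IsAdmissible m c)
    (hc' : IsAdmissible m c') (h : box p m c = box p m c') : c = c' :=
  le_antisymm ((powVec_mem_box_iff hp hc.1).1 (h ▸ powVec_mem_box c'))
    ((powVec_mem_box_iff hp hc'.1).1 (h ▸ powVec_mem_box c))

theorem box_le_closure [Fintype ι] [DecidableEq ι] (hp : p ≠ 0) (c : ι → ℕ) :
    box p m c ≤ AddSubgroup.closure
      (Set.range fun i => Pi.single i ((p : ZMod (p ^ m i)) ^ c i)) := by
  intro x hx
  rw [← Finset.univ_sum_single x]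
  refine AddSubgroup.sum_mem _ fun i _ => ?_
  have : NeZero (p ^ m i) := ⟨pow_ne_zero _ hp⟩
  obtain ⟨y, hy⟩ := mem_box.1 hx i
  rw [hy, ← ZMod.natCast_zmod_val y, mul_comm, ← nsmul_eq_mul, Pi.single_smul]
  exact AddSubgroup.nsmul_mem _ (AddSubgroup.subset_closure (Set.mem_range_self i)) _

theorem single_mem_closure_orbit [DecidableEq ι] (hp : Odd p) (c : ι → ℕ) (i : ι) :
    Pi.single i ((p : ZMod (p ^ m i)) ^ c i) ∈
      AddSubgroup.closure (orbit (AddAut (ZModPowPi p m)) (powVec p m c)) := by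
  have h2 : IsUnit (2 : ZMod (p ^ m i)) := by
    exact_mod_cast (ZMod.isUnit_iff_coprime 2 _).2 (Nat.coprime_two_left.2 hp.pow)
  have : Pi.single i ((p : ZMod (p ^ m i)) ^ c i) =
      update (powVec p m c) i (powVec p m c i * ↑h2.unit) - powVec p m c := by
    ext k
    rcases eq_or_ne k i with rfl | hk
    · simp only [Pi.single_eq_same, powVec, IsUnit.unit_spec, Pi.sub_apply, update_self]
      ring
    · simp [hk]
  rw [this]
  refine AddSubgroup.sub_mem _ (AddSubgroup.subset_closure ?_)
    (AddSubgroup.subset_closure (mem_orbit_self _))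
  exact orbit_eq_iff.1 (orbit_update_mul_unit _ i _)

theorem exists_box_eq [Fintype ι] [DecidableEq ι] (hp : p.Prime) (hp2 : p ≠ 2)
    {H : AddSubgroup (ZModPowPi p m)}
    (hH : ∀ φ : AddAut (ZModPowPi p m), H.map φ.toAddMonoidHom = H) :
    ∃ c, IsAdmissible m c ∧ H = box p m c := by
  have horbit : ∀ x ∈ H, orbit (AddAut (ZModPowPi p m)) x ⊆ H := by
    rintro x hx _ ⟨φ, rfl⟩
    exact hH φ ▸ AddSubgroup.mem_map_of_mem _ hx
  let S := {c | IsAdmissible m c ∧ powVec p m c ∈ H}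
  have hS : m ∈ S := ⟨isAdmissible_self, powVec_self (p := p) ▸ H.zero_mem⟩
  let cmin : ι → ℕ := fun i => sInf ((fun c : ι → ℕ => c i) '' S)
  have cmin_le : ∀ c ∈ S, cmin ≤ c := fun c hc i => Nat.sInf_le ⟨c, hc, rfl⟩
  have exists_eq : ∀ i, ∃ c ∈ S, c i = cmin i := fun i =>
    Nat.sInf_mem (s := (fun c : ι → ℕ => c i) '' S) ⟨_, m, hS, rfl⟩
  have hcmin : IsAdmissible m cmin := by
    refine ⟨cmin_le m hS, fun i j => ?_⟩
    obtain ⟨c, hc, hcj⟩ := exists_eq j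
    exact hcj ▸ (cmin_le c hc i).trans (hc.1.2 i j)
  refine ⟨cmin, hcmin, le_antisymm (fun x hx => ?_) ?_⟩
  · obtain ⟨c, hc, hxc⟩ := exists_isAdmissible_orbit_eq hp x
    have hcS : c ∈ S := ⟨hc, horbit x hx (hxc ▸ mem_orbit_self _)⟩
    obtain ⟨φ, hφ⟩ := orbit_eq_iff.1 hxc
    refine box_anti (cmin_le c hcS) ?_
    rw [← hφ]
    exact map_mem_box hp.ne_zero hc.2 φ.toAddMonoidHom (powVec_mem_box c)
  · refine (box_le_closure hp.ne_zero cmin).trans ((AddSubgroup.closure_le _).2 ?_)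
    rintro _ ⟨i, rfl⟩
    obtain ⟨c, hc, hci⟩ := exists_eq i
    have hle : AddSubgroup.closure (orbit (AddAut (ZModPowPi p m)) (powVec p m c)) ≤ H :=
      (AddSubgroup.closure_le _).2 (horbit _ hc.2)
    have := single_mem_closure_orbit (m := m) (hp.odd_of_ne_two hp2) c i
    rw [hci] at this
    exact hle this

theorem card_characteristic [Fintype ι] [DecidableEq ι] (hp : p.Prime) (hp2 : p ≠ 2) :
    Nat.card {H : AddSubgroup (ZModPowPi p m) //
        ∀ φ : AddAut (ZModPowPi p m), H.map φ.toAddMonoidHom = H} =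
      Nat.card {c // IsAdmissible m c} := by
  refine (Nat.card_eq_of_bijective (fun c => ⟨box p m c.1, box_map_eq hp.ne_zero c.2⟩)
    ⟨fun c c' h => Subtype.ext ?_, fun H => ?_⟩).symm
  · exact box_injective hp.one_lt c.2 c'.2 (congrArg Subtype.val h)
  · obtain ⟨c, hc, hH⟩ := exists_box_eq hp hp2 H.2
    exact ⟨⟨c, hc⟩, Subtype.ext hH.symm⟩

section Counting

open Finset

variable {n : ℕ} {lam : ℕ → ℕ}

theorem sum_range_le_and_add_le (hlam : ∀ k < n, lam k ≤ lam (k + 1)) {e : ℕ → ℕ}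
    (he : ∀ k < n, e k ≤ lam (k + 1) - lam k) {k l : ℕ} (hkl : k ≤ l) (hl : l ≤ n) :
    ∑ j ∈ range k, e j ≤ ∑ j ∈ range l, e j ∧
      ∑ j ∈ range l, e j + lam k ≤ ∑ j ∈ range k, e j + lam l := by
  induction l, hkl using Nat.le_induction with
  | base => exact ⟨le_rfl, le_rfl⟩
  | succ l hkl ih =>
    have := ih (by omega)
    have := he l (by omega)
    have := hlam l (by omega)
    rw [sum_range_succ]
    omega

variable (n lam) in
abbrev Steps := ∀ i : Fin n, Fin (lam (i + 1) - lam i + 1)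

namespace Steps

def seq (d : Steps n lam) (k : ℕ) : ℕ := if h : k < n then d ⟨k, h⟩ else 0

theorem seq_le (d : Steps n lam) {k : ℕ} (hk : k < n) : seq d k ≤ lam (k + 1) - lam k := by
  simpa [seq, hk, Nat.lt_succ_iff] using (d ⟨k, hk⟩).isLt

def partialSums (d : Steps n lam) (i : Fin n) : ℕ := ∑ j ∈ range (i + 1), seq d j

theorem isAdmissible_partialSums (hlam0 : lam 0 = 0) (hlam : ∀ k < n, lam k ≤ lam (k + 1))
    (d : Steps n lam) : IsAdmissible (fun i : Fin n => lam (i + 1)) (partialSums d) := by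
  have key := fun {k l} => sum_range_le_and_add_le hlam (fun _ => seq_le d) (k := k) (l := l)
  refine ⟨fun i => ?_, fun i j => ?_⟩
  · have := key (Nat.zero_le (i + 1)) i.isLt
    simp_all [partialSums]
  · simp only [partialSums]
    rcases le_total (i : ℕ) j with hij | hji
    · have := (key (Nat.add_le_add_right hij 1) j.isLt).1
      omega
    · have := (key (Nat.add_le_add_right hji 1) i.isLt).2
      omega

theorem partialSums_injective : Function.Injective (partialSums (n := n) (lam := lam)) := by
  intro d d' h
  have hsum : ∀ k ≤ n, ∑ j ∈ range k, seq d j = ∑ j ∈ range k, seq d' j := by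
    rintro (_ | k) hk
    · simp
    · exact congrFun h ⟨k, hk⟩
  ext i
  have h1 := hsum (i + 1) i.isLt
  rw [sum_range_succ, sum_range_succ, hsum i i.isLt.le] at h1
  simpa [seq] using h1

end Steps

def consZero (c : Fin n → ℕ) (k : ℕ) : ℕ :=
  if h : 0 < k ∧ k ≤ n then c ⟨k - 1, by omega⟩ else 0

theorem consZero_succ (c : Fin n → ℕ) (i : Fin n) : consZero c (i + 1) = c i := by
  simp [consZero, i.isLt]

theorem consZero_le_succ_and_succ_le (hlam0 : lam 0 = 0) (hlam : ∀ k < n, lam k ≤ lam (k + 1))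
    {c : Fin n → ℕ} (hc : IsAdmissible (fun i : Fin n => lam (i + 1)) c) {k : ℕ} (hk : k < n) :
    consZero c k ≤ consZero c (k + 1) ∧
      consZero c (k + 1) ≤ consZero c k + (lam (k + 1) - lam k) := by
  rcases k with _ | k
  · have := hc.1 ⟨0, hk⟩
    simp_all [consZero, Nat.one_le_iff_ne_zero.2 hk.ne']
  · have h1 := hc.2 ⟨k, by omega⟩ ⟨k + 1, hk⟩
    have h2 := hc.2 ⟨k + 1, hk⟩ ⟨k, by omega⟩
    have := hlam (k + 1) hk
    have e1 := consZero_succ c ⟨k, by omega⟩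
    have e2 := consZero_succ c ⟨k + 1, hk⟩
    simp only at h1 h2 e1 e2
    omega

theorem exists_partialSums_eq (hlam0 : lam 0 = 0) (hlam : ∀ k < n, lam k ≤ lam (k + 1))
    {c : Fin n → ℕ} (hc : IsAdmissible (fun i : Fin n => lam (i + 1)) c) :
    ∃ d : Steps n lam, d.partialSums = c := by
  have hstep := fun {k} => consZero_le_succ_and_succ_le hlam0 hlam hc (k := k)
  let d : Steps n lam := fun i =>
    ⟨consZero c (i + 1) - consZero c i, by have := hstep i.isLt; omega⟩
  have hsum : ∀ k ≤ n, ∑ j ∈ range k, d.seq j = consZero c k := by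
    intro k hk
    induction k with
    | zero => simp [consZero]
    | succ k ih =>
      rw [sum_range_succ, ih (by omega)]
      have := hstep (k := k) (by omega)
      simp only [Steps.seq, dif_pos (show k < n by omega), d]
      omega
  exact ⟨d, funext fun i => (hsum (i + 1) i.isLt).trans (consZero_succ c i)⟩

theorem card_isAdmissible (hlam0 : lam 0 = 0) (hlam : ∀ k < n, lam k ≤ lam (k + 1)) :
    Nat.card {c // IsAdmissible (fun i : Fin n => lam (i + 1)) c} =
      ∏ i ∈ range n, (lam (i + 1) - lam i + 1) := by
  let f : Steps n lam → {c // IsAdmissible (fun i : Fin n => lam (i + 1)) c} :=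
    fun d => ⟨d.partialSums, Steps.isAdmissible_partialSums hlam0 hlam d⟩
  rw [← Nat.card_eq_of_bijective f
    ⟨fun d d' h => Steps.partialSums_injective (congrArg Subtype.val h),
      fun c => (exists_partialSums_eq hlam0 hlam c.2).imp fun d hd => Subtype.ext hd⟩]
  simp [Fin.prod_univ_eq_prod_range (fun i => lam (i + 1) - lam i + 1)]

end Counting

end ZModPowPi

theorem card_automorphism_classes_general (p : ℕ) (hp : p.Prime)
    (n : ℕ) (lam : ℕ → ℕ) (hlam0 : lam 0 = 0)
    (hmono : ∀ i j, 1 ≤ i → i ≤ j → j ≤ n → lam i ≤ lam j) :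
    Nat.card (AddAction.orbitRel.Quotient
        (AddAut (∀ i : Fin n, ZMod (p ^ lam ((i : ℕ) + 1))))
        (∀ i : Fin n, ZMod (p ^ lam ((i : ℕ) + 1)))) =
      ∏ i ∈ Finset.range n, (lam (i + 1) - lam i + 1) ∧
    (p ≠ 2 →
      Nat.card {H : AddSubgroup (∀ i : Fin n, ZMod (p ^ lam ((i : ℕ) + 1))) //
          ∀ φ : AddAut (∀ i : Fin n, ZMod (p ^ lam ((i : ℕ) + 1))),
            H.map φ.toAddMonoidHom = H} =
        ∏ i ∈ Finset.range n, (lam (i + 1) - lam i + 1)) := by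
  have hlam : ∀ k < n, lam k ≤ lam (k + 1) := by
    rintro (_ | k) hk
    · simp [hlam0]
    · exact hmono _ _ (by omega) (by omega) hk
  rw [← ZModPowPi.card_isAdmissible hlam0 hlam]
  exact ⟨ZModPowPi.card_orbitRel_quotient hp,
    fun hp2 => ZModPowPi.card_characteristic hp hp2⟩

/-- Miller–Baer–Birkhoff: for `G = Z_{p^{λ_1}} × ⋯ × Z_{p^{λ_n}}` (with the convention
`λ_0 = 0`), the number of orbits of `Aut(G)` acting on `G` equals
`∏_{i=1}^{n} (λ_i − λ_{i−1} + 1)`; and if `p ≠ 2` this is also the number of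
characteristic subgroups of `G`. -/
theorem card_automorphism_classes (p : ℕ) (hp : p.Prime) [NeZero p]
    (n : ℕ) (hn : 1 ≤ n) (lam : ℕ → ℕ) (hlam0 : lam 0 = 0)
    (hlam1 : ∀ i, 1 ≤ i → i ≤ n → 1 ≤ lam i)
    (hmono : ∀ i j, 1 ≤ i → i ≤ j → j ≤ n → lam i ≤ lam j) :
    Nat.card (AddAction.orbitRel.Quotient
        (AddAut (∀ i : Fin n, ZMod (p ^ lam ((i : ℕ) + 1))))
        (∀ i : Fin n, ZMod (p ^ lam ((i : ℕ) + 1)))) =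
      ∏ i ∈ Finset.range n, (lam (i + 1) - lam i + 1) ∧
    (p ≠ 2 →
      Nat.card {H : AddSubgroup (∀ i : Fin n, ZMod (p ^ lam ((i : ℕ) + 1))) //
          ∀ φ : AddAut (∀ i : Fin n, ZMod (p ^ lam ((i : ℕ) + 1))),
            H.map φ.toAddMonoidHom = H} =
        ∏ i ∈ Finset.range n, (lam (i + 1) - lam i + 1)) :=
  card_automorphism_classes_general p hp n lam hlam0 hmono
end

section
/- Let p be a prime, X a finite set with n ≥ 1 elements, and G = Z_p × Z_{p^3} × Z_{p^5} × ⋯ × Z_{p^{2n−1}}. Then there is an embedding ψ of the boolean lattice of subsets of X into the lattice of characteristic subgroups of G: an injective map ψ from subsets of X to characteristic subgroups of G satisfying ψ(Y_1 ∩ Y_2) = ψ(Y_1) ∩ ψ(Y_2) and ψ(Y_1 ∪ Y_2) = ⟨ψ(Y_1), ψ(Y_2)⟩ (the subgroup generated by ψ(Y_1) and ψ(Y_2)) for all Y_1, Y_2 ⊆ X. Moreover ψ can be chosen so that |ψ(Y)| = p^{n(n−1)/2 + |Y|} for every Y ⊆ X; in particular, |Y_1| = |Y_2| if and only if |ψ(Y_1)|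 = |ψ(Y_2)|. -/
open AddSubgroup

/-- Membership in the cyclic subgroup generated by `p^t` in `ZMod (p^Λ)` is
divisibility of a natural representative. -/
lemma aux_mem_zmult_iff {p : ℕ} {Λ t : ℕ} (ht : t ≤ Λ) (u : ℕ) :
    ((u : ZMod (p ^ Λ)) ∈ zmultiples ((p : ZMod (p ^ Λ)) ^ t)) ↔ p ^ t ∣ u := by
  constructor
  · rintro ⟨k, hk⟩
    simp only [zsmul_eq_mul] at hk
    have h0 : ((k * (p : ℤ) ^ t - u : ℤ) : ZMod (p ^ Λ)) = 0 := by
      push_cast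
      rw [hk]; ring
    have h1 : ((p ^ Λ : ℕ) : ℤ) ∣ k * (p : ℤ) ^ t - u := by
      rwa [ZMod.intCast_zmod_eq_zero_iff_dvd] at h0
    have h2 : ((p : ℤ) ^ t) ∣ k * (p : ℤ) ^ t - u := by
      refine dvd_trans ?_ h1
      push_cast
      exact pow_dvd_pow _ ht
    have h3 : ((p : ℤ) ^ t) ∣ (u : ℤ) := by
      have := dvd_sub (Dvd.dvd.mul_left dvd_rfl k : ((p:ℤ)^t) ∣ k * (p:ℤ)^t) h2
      simpa using this
    exact_mod_cast h3
  · rintro ⟨m, rfl⟩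
    refine ⟨(m : ℤ), ?_⟩
    show (m:ℤ) • ((p : ZMod (p ^ Λ)) ^ t) = _
    rw [zsmul_eq_mul]
    push_cast
    ring

/-- Any additive hom between the cyclic factors maps the distinguished cyclic
subgroups into each other, under the compatibility conditions on exponents. -/
lemma aux_hom {p : ℕ} (hp : p.Prime) {L L' a b : ℕ}
    (h1 : L' ≤ L → b ≤ a) (h2 : L ≤ L' → b + L ≤ a + L') (hb : b ≤ L')
    (g : ZMod (p ^ L) →+ ZMod (p ^ L')) (x : ZMod (p ^ L))
    (hx : x ∈ zmultiples ((p : ZMod (p ^ L)) ^ a)) :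
    g x ∈ zmultiples ((p : ZMod (p ^ L')) ^ b) := by
  haveI : NeZero (p ^ L') := ⟨(pow_pos hp.pos _).ne'⟩
  obtain ⟨k, rfl⟩ := hx
  rw [map_zsmul]
  refine zsmul_mem ?_ k
  set c : ZMod (p ^ L') := g 1 with hc
  set v : ℕ := c.val with hv
  have hcv : (v : ZMod (p ^ L')) = c := by
    rw [hv, ZMod.natCast_val, ZMod.cast_id]
  have hL : ((p ^ L * v : ℕ) : ZMod (p ^ L')) = 0 := by
    rw [Nat.cast_mul, hcv, hc, ← nsmul_eq_mul, ← map_nsmul]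
    have : (p ^ L) • (1 : ZMod (p ^ L)) = 0 := by
      simp [nsmul_eq_mul, ZMod.natCast_self]
    rw [this, map_zero]
  have hdL : p ^ L' ∣ p ^ L * v := by
    rwa [ZMod.natCast_eq_zero_iff] at hL
  have hdvd : p ^ b ∣ p ^ a * v := by
    rcases le_total L' L with h | h
    · exact dvd_mul_of_dvd_left (pow_dvd_pow p (h1 h)) v
    · obtain ⟨w, hw⟩ : p ^ (L' - L) ∣ v := by
        have h' : p ^ L * p ^ (L' - L) ∣ p ^ L * v := by
          rw [← pow_add]
          have : L + (L' - L) = L' := by omega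
          rwa [this]
        exact (mul_dvd_mul_iff_left (a := p ^ L) (pow_pos hp.pos L).ne').mp h'
      rw [hw, ← mul_assoc, ← pow_add]
      exact dvd_mul_of_dvd_left (pow_dvd_pow p (by have := h2 h; omega)) w
  have key : g ((p : ZMod (p ^ L)) ^ a) = ((p ^ a * v : ℕ) : ZMod (p ^ L')) := by
    have : ((p : ZMod (p ^ L)) ^ a) = (p ^ a : ℕ) • (1 : ZMod (p ^ L)) := by
      simp [nsmul_eq_mul]
    rw [this, map_nsmul, ← hc, Nat.cast_mul, hcv, nsmul_eq_mul]
  rw [key]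
  exact (aux_mem_zmult_iff hb _).mpr hdvd

/-- The product of the cyclic subgroups `p^(a i) · ZMod (p^(2i+1))`. -/
def Hsub (p n : ℕ) (a : Fin n → ℕ) :
    AddSubgroup (∀ i : Fin n, ZMod (p ^ (2 * (i : ℕ) + 1))) :=
  AddSubgroup.pi Set.univ fun i =>
    zmultiples ((p : ZMod (p ^ (2 * (i : ℕ) + 1))) ^ (a i))

lemma mem_Hsub_iff {p n : ℕ} [NeZero p] {a : Fin n → ℕ}
    (ha : ∀ i : Fin n, a i ≤ 2 * (i : ℕ) + 1)
    (x : ∀ i : Fin n, ZMod (p ^ (2 * (i : ℕ) + 1))) :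
    x ∈ Hsub p n a ↔ ∀ i : Fin n, p ^ (a i) ∣ (x i).val := by
  rw [Hsub, AddSubgroup.mem_pi]
  refine forall_congr' fun i => ?_
  haveI : NeZero (p ^ (2 * (i : ℕ) + 1)) := ⟨pow_ne_zero _ (NeZero.ne p)⟩
  simp only [Set.mem_univ, forall_true_left]
  conv_lhs => rw [show x i = (((x i).val : ℕ) : ZMod (p ^ (2 * (i : ℕ) + 1))) by
    rw [ZMod.natCast_val, ZMod.cast_id]]
  exact aux_mem_zmult_iff (ha i) _

/-- `Hsub p n a` is fully invariant when `a` and `(2i+1) - a` are monotone. -/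
lemma Hsub_map_le {p n : ℕ} (hp : p.Prime) [NeZero p] {a : Fin n → ℕ}
    (ha1 : ∀ i j : Fin n, i ≤ j → a i ≤ a j)
    (ha2 : ∀ i j : Fin n, i ≤ j → a j + 2 * (i : ℕ) ≤ a i + 2 * (j : ℕ))
    (ha3 : ∀ i : Fin n, a i ≤ 2 * (i : ℕ) + 1)
    (f : (∀ i : Fin n, ZMod (p ^ (2 * (i : ℕ) + 1))) →+
         (∀ i : Fin n, ZMod (p ^ (2 * (i : ℕ) + 1))))
    {x : ∀ i : Fin n, ZMod (p ^ (2 * (i : ℕ) + 1))} (hx : x ∈ Hsub p n a) :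
    f x ∈ Hsub p n a := by
  rw [Hsub, AddSubgroup.mem_pi] at hx ⊢
  intro i _
  have hxs : f x = ∑ j : Fin n, f (Pi.single j (x j)) := by
    rw [← map_sum]
    congr 1
    exact (Finset.univ_sum_single x).symm
  rw [hxs, Finset.sum_apply]
  refine sum_mem fun j _ => ?_
  have hj : x j ∈ zmultiples ((p : ZMod (p ^ (2 * (j : ℕ) + 1))) ^ (a j)) :=
    hx j (Set.mem_univ j)
  let g : ZMod (p ^ (2 * (j : ℕ) + 1)) →+ ZMod (p ^ (2 * (i : ℕ) + 1)) :=
    (Pi.evalAddMonoidHom _ i).comp (f.comp (AddMonoidHom.single _ j))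
  have := aux_hom hp (L := 2 * (j : ℕ) + 1) (L' := 2 * (i : ℕ) + 1)
    (a := a j) (b := a i)
    (fun h => ha1 i j (by rw [Fin.le_def]; omega))
    (fun h => by have := ha2 j i (by rw [Fin.le_def]; omega); omega)
    (ha3 i) g (x j) hj
  exact this

lemma card_Hsub {p n : ℕ} (hp : p.Prime) [NeZero p] {a : Fin n → ℕ}
    (ha : ∀ i : Fin n, a i ≤ 2 * (i : ℕ) + 1) :
    Nat.card (Hsub p n a) = ∏ i : Fin n, p ^ (2 * (i : ℕ) + 1 - a i) := by
  have e : (Hsub p n a) ≃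
      ∀ i : Fin n, (zmultiples ((p : ZMod (p ^ (2 * (i : ℕ) + 1))) ^ (a i))) :=
    Equiv.Set.univPi _
  rw [Nat.card_congr e, Nat.card_pi]
  refine Finset.prod_congr rfl fun i _ => ?_
  haveI : NeZero (p ^ (2 * (i : ℕ) + 1)) := ⟨pow_ne_zero _ (NeZero.ne p)⟩
  rw [Nat.card_zmultiples]
  have hcast : ((p : ZMod (p ^ (2 * (i : ℕ) + 1))) ^ (a i))
      = ((p ^ a i : ℕ) : ZMod (p ^ (2 * (i : ℕ) + 1))) := by push_cast; ring
  rw [hcast, ZMod.addOrderOf_coe _ (pow_ne_zero _ (NeZero.ne p))]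
  rw [Nat.gcd_eq_right (pow_dvd_pow p (ha i)), Nat.pow_div (ha i) hp.pos]

/-- For `G = Z_p × Z_{p^3} × ⋯ × Z_{p^{2n−1}}` and a finite set `X` with `n` elements,
the boolean lattice of subsets of `X` embeds into the lattice of characteristic subgroups
of `G`: there is an injective map `ψ` from subsets of `X` to characteristic subgroups of
`G` turning `∩` into `⊓` and `∪` into `⊔` (the subgroup generated by the pair), with
`|ψ(Y)| = p^{n(n−1)/2 + |Y|}`; in particular `|Y₁| = |Y₂| ↔ |ψ(Y₁)| = |ψ(Y₂)|`. -/
theorem boolean_lattice_embeds_in_characteristic_subgroups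
    (p : ℕ) (hp : p.Prime) [NeZero p] (n : ℕ) (hn : 1 ≤ n)
    (X : Type*) [Fintype X] [DecidableEq X] (hX : Fintype.card X = n) :
    ∃ ψ : Finset X → AddSubgroup (∀ i : Fin n, ZMod (p ^ (2 * (i : ℕ) + 1))),
      Function.Injective ψ ∧
      (∀ Y, ∀ φ : AddAut (∀ i : Fin n, ZMod (p ^ (2 * (i : ℕ) + 1))),
        (ψ Y).map φ.toAddMonoidHom = ψ Y) ∧
      (∀ Y₁ Y₂, ψ (Y₁ ∩ Y₂) = ψ Y₁ ⊓ ψ Y₂) ∧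
      (∀ Y₁ Y₂, ψ (Y₁ ∪ Y₂) = ψ Y₁ ⊔ ψ Y₂) ∧
      (∀ Y, Nat.card (ψ Y) = p ^ (n * (n - 1) / 2 + Y.card)) ∧
      (∀ Y₁ Y₂, Y₁.card = Y₂.card ↔ Nat.card (ψ Y₁) = Nat.card (ψ Y₂)) := by
  classical
  let e : X ≃ Fin n := Fintype.equivFinOfCardEq hX
  set A : Finset X → Fin n → ℕ :=
    fun Y i => if e.symm i ∈ Y then (i : ℕ) else (i : ℕ) + 1 with hA
  have hA3 : ∀ Y (i : Fin n), A Y i ≤ 2 * (i : ℕ) + 1 := by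
    intro Y i; simp only [hA]; split_ifs <;> omega
  have hA1 : ∀ Y (i j : Fin n), i ≤ j → A Y i ≤ A Y j := by
    intro Y i j hij
    rcases hij.lt_or_eq with h | rfl
    · have h' : (i : ℕ) < (j : ℕ) := h
      simp only [hA]; split_ifs <;> omega
    · exact le_rfl
  have hA2 : ∀ Y (i j : Fin n), i ≤ j →
      A Y j + 2 * (i : ℕ) ≤ A Y i + 2 * (j : ℕ) := by
    intro Y i j hij
    rcases hij.lt_or_eq with h | rfl
    · have h' : (i : ℕ) < (j : ℕ) := h
      simp only [hA]; split_ifs <;> omega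
    · omega
  have hcard : ∀ Y : Finset X,
      Nat.card (Hsub p n (A Y)) = p ^ (n * (n - 1) / 2 + Y.card) := by
    intro Y
    rw [card_Hsub hp (hA3 Y), Finset.prod_pow_eq_pow_sum]
    congr 1
    have hterm : ∀ i : Fin n,
        2 * (i : ℕ) + 1 - A Y i = (i : ℕ) + (if e.symm i ∈ Y then 1 else 0) := by
      intro i; simp only [hA]; split_ifs <;> omega
    rw [Finset.sum_congr rfl fun i _ => hterm i, Finset.sum_add_distrib]
    congr 1
    · rw [Fin.sum_univ_eq_sum_range (fun i => i)]
      have := Finset.sum_range_id_mul_two n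
      omega
    · rw [show (∑ i : Fin n, if e.symm i ∈ Y then 1 else 0)
            = ∑ x : X, if x ∈ Y then 1 else 0 from
          Fintype.sum_equiv e.symm _ _ fun i => rfl]
      rw [Finset.sum_ite_mem, Finset.univ_inter, Finset.sum_const, smul_eq_mul,
        mul_one]
  refine ⟨fun Y => Hsub p n (A Y), ?_, ?_, ?_, ?_, fun Y => hcard Y, ?_⟩
  · -- injectivity
    have key : ∀ Y₁ Y₂ : Finset X, Hsub p n (A Y₁) = Hsub p n (A Y₂) → Y₁ ⊆ Y₂ := by
      intro Y₁ Y₂ h x hx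
      set i := e x with hi
      set z : ∀ j : Fin n, ZMod (p ^ (2 * (j : ℕ) + 1)) :=
        Pi.single i (((p ^ (i : ℕ) : ℕ) : ZMod (p ^ (2 * (i : ℕ) + 1)))) with hz
      have hval : (z i).val = p ^ (i : ℕ) := by
        rw [hz, Pi.single_eq_same, ZMod.val_cast_of_lt]
        exact Nat.pow_lt_pow_right hp.one_lt (by omega)
      have hz1 : z ∈ Hsub p n (A Y₁) := by
        rw [mem_Hsub_iff (hA3 _)]
        intro j
        rcases eq_or_ne j i with rfl | hne
        · rw [hval]
          refine pow_dvd_pow p ?_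
          have hAe : A Y₁ i = (i : ℕ) := by
            simp only [hA]
            rw [if_pos (show e.symm i ∈ Y₁ by rw [hi]; simpa using hx)]
          omega
        · rw [hz, Pi.single_eq_of_ne hne]
          simp
      rw [h, mem_Hsub_iff (hA3 _)] at hz1
      have := hz1 i
      rw [hval] at this
      by_contra hmem
      have hAi : A Y₂ i = (i : ℕ) + 1 := by
        simp only [hA, hi]
        rw [if_neg (by simpa using hmem)]
      rw [hAi] at this
      have := (Nat.pow_dvd_pow_iff_le_right hp.one_lt).mp this
      omega
    intro Y₁ Y₂ h
    exact Finset.Subset.antisymm (key _ _ h) (key _ _ h.symm)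
  · -- characteristic
    intro Y φ
    apply le_antisymm
    · rw [AddSubgroup.map_le_iff_le_comap]
      intro y hy
      exact Hsub_map_le hp (hA1 Y) (hA2 Y) (hA3 Y) φ.toAddMonoidHom hy
    · intro y hy
      rw [AddSubgroup.mem_map]
      refine ⟨φ.symm y, Hsub_map_le hp (hA1 Y) (hA2 Y) (hA3 Y) φ.symm.toAddMonoidHom hy, ?_⟩
      exact φ.apply_symm_apply y
  · -- intersection
    intro Y₁ Y₂
    ext x
    rw [AddSubgroup.mem_inf, mem_Hsub_iff (hA3 _), mem_Hsub_iff (hA3 _),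
      mem_Hsub_iff (hA3 _), ← forall_and]
    refine forall_congr' fun i => ?_
    have hm : A (Y₁ ∩ Y₂) i = max (A Y₁ i) (A Y₂ i) := by
      by_cases h1 : e.symm i ∈ Y₁ <;> by_cases h2 : e.symm i ∈ Y₂ <;>
        simp [hA, Finset.mem_inter, h1, h2] <;> omega
    rw [hm]
    constructor
    · intro h
      exact ⟨dvd_trans (pow_dvd_pow p (le_max_left _ _)) h,
        dvd_trans (pow_dvd_pow p (le_max_right _ _)) h⟩
    · rintro ⟨h1, h2⟩
      rcases max_cases (A Y₁ i) (A Y₂ i) with ⟨hm', _⟩ | ⟨hm', _⟩ <;>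
        rw [hm'] <;> assumption
  · -- union
    intro Y₁ Y₂
    apply le_antisymm
    · intro x hx
      rw [mem_Hsub_iff (hA3 _)] at hx
      set y : ∀ i : Fin n, ZMod (p ^ (2 * (i : ℕ) + 1)) :=
        fun i => if e.symm i ∈ Y₁ then x i else 0 with hy
      set z : ∀ i : Fin n, ZMod (p ^ (2 * (i : ℕ) + 1)) :=
        fun i => if e.symm i ∈ Y₁ then 0 else x i with hz
      have hxyz : x = y + z := by
        funext i
        simp only [hy, hz, Pi.add_apply]
        split_ifs <;> simp
      have hy' : y ∈ Hsub p n (A Y₁) := by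
        rw [mem_Hsub_iff (hA3 _)]
        intro i
        simp only [hy]
        split_ifs with h
        · have hAe : A Y₁ i = A (Y₁ ∪ Y₂) i := by
            simp [hA, Finset.mem_union, h]
          rw [hAe]
          exact hx i
        · simp
      have hz' : z ∈ Hsub p n (A Y₂) := by
        rw [mem_Hsub_iff (hA3 _)]
        intro i
        simp only [hz]
        split_ifs with h
        · simp
        · have hAe : A Y₂ i = A (Y₁ ∪ Y₂) i := by
            simp [hA, Finset.mem_union, h]
          rw [hAe]
          exact hx i
      rw [hxyz]
      exact add_mem (AddSubgroup.mem_sup_left hy') (AddSubgroup.mem_sup_right hz')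
    · refine sup_le ?_ ?_ <;>
        · intro x hx
          rw [mem_Hsub_iff (hA3 _)] at hx ⊢
          intro i
          refine dvd_trans (pow_dvd_pow p ?_) (hx i)
          by_cases h1 : e.symm i ∈ Y₁ <;> by_cases h2 : e.symm i ∈ Y₂ <;>
            simp [hA, Finset.mem_union, h1, h2]
  · -- cardinality iff
    intro Y₁ Y₂
    rw [hcard, hcard]
    constructor
    · intro h; rw [h]
    · intro h
      have := Nat.pow_right_injective hp.two_le h
      omega
end
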